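/- arXiv:2202.02740 — 7 statements merged into one kernel-verified Lean document; each statement's English description precedes it below -/
import Mathlib

section
/- The points (2,1) and (2i,−1) lie in the closure of the symmetrized bidisc G₂, but their midpoint (1+i, 0) does not lie in the closure of G₂; consequently G₂ is not convex. -/
/-- The symmetrized bidisc `G₂ = {(z+w, zw) : |z| < 1, |w| < 1} ⊆ ℂ²`. -/
def symBidisc : Set (ℂ × ℂ) :=
  {p | ∃ z w : ℂ, ‖z‖ < 1 ∧ ‖w‖ < 1 ∧ p = (z + w, z * w)}

lemma symBidisc_subset : symBidisc ⊆ {p : ℂ × ℂ | ‖p.1‖ ≤ 1 + ‖p.2‖} := by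
  rintro p ⟨z, w, hz, hw, rfl⟩
  simp only [Set.mem_setOf_eq, norm_mul]
  calc ‖z + w‖ ≤ ‖z‖ + ‖w‖ := norm_add_le _ _
    _ ≤ 1 + ‖z‖ * ‖w‖ := by nlinarith [norm_nonneg z, norm_nonneg w]

lemma mem_closure_of_param (a : ℂ) (ha : ‖a‖ ≤ 1) :
    ((a + a, a * a) : ℂ × ℂ) ∈ closure symBidisc := by
  haveI : (nhdsWithin (1:ℝ) (Set.Ioo (0:ℝ) 1)).NeBot := by
    refine mem_closure_iff_nhdsWithin_neBot.mp ?_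
    rw [closure_Ioo (by norm_num : (0:ℝ) ≠ 1)]
    simp
  have hcont : Filter.Tendsto (fun t : ℝ => (((t : ℂ) * a + t * a, (t * a) * (t * a)) : ℂ × ℂ))
      (nhdsWithin (1:ℝ) (Set.Ioo (0:ℝ) 1)) (nhds ((a + a, a * a) : ℂ × ℂ)) := by
    have : Filter.Tendsto (fun t : ℝ => (((t : ℂ) * a + t * a, (t * a) * (t * a)) : ℂ × ℂ))
        (nhds (1:ℝ)) (nhds ((a + a, a * a) : ℂ × ℂ)) := by
      have := (Continuous.tendsto (by continuity :
        Continuous (fun t : ℝ => (((t : ℂ) * a + t * a, (t * a) * (t * a)) : ℂ × ℂ))) 1)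
      simpa using this
    exact this.mono_left nhdsWithin_le_nhds
  refine mem_closure_of_tendsto hcont ?_
  filter_upwards [self_mem_nhdsWithin] with t ht
  have habs : ‖(t : ℂ) * a‖ < 1 := by
    rw [norm_mul, Complex.norm_real, Real.norm_of_nonneg ht.1.le]
    nlinarith [ht.1, ht.2, norm_nonneg a]
  exact ⟨(t : ℂ) * a, (t : ℂ) * a, habs, habs, rfl⟩

/-- `(2,1)` and `(2i,−1)` lie in the closure of the symmetrized bidisc `G₂`, but their
midpoint `(1+i, 0)` does not; consequently `G₂` is not convex. -/
theorem symBidisc_not_convex :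
    ((2 : ℂ), (1 : ℂ)) ∈ closure symBidisc ∧
    ((2 * Complex.I), (-1 : ℂ)) ∈ closure symBidisc ∧
    (((1 : ℂ) + Complex.I), (0 : ℂ)) ∉ closure symBidisc ∧
    (((1 : ℂ) + Complex.I), (0 : ℂ)) =
      (1 / 2 : ℝ) • (((2 : ℂ), (1 : ℂ)) : ℂ × ℂ)
        + (1 / 2 : ℝ) • (((2 * Complex.I), (-1 : ℂ)) : ℂ × ℂ) ∧
    ¬ Convex ℝ symBidisc := by
  have h1 : ((2 : ℂ), (1 : ℂ)) ∈ closure symBidisc := by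
    have := mem_closure_of_param 1 (by simp)
    norm_num at this
    exact this
  have h2 : ((2 * Complex.I), (-1 : ℂ)) ∈ closure symBidisc := by
    have := mem_closure_of_param Complex.I (by simp)
    simpa [two_mul, Complex.I_mul_I] using this
  have h3 : (((1 : ℂ) + Complex.I), (0 : ℂ)) ∉ closure symBidisc := by
    intro hmem
    have hclosed : IsClosed {p : ℂ × ℂ | ‖p.1‖ ≤ 1 + ‖p.2‖} := by
      apply isClosed_le
      · exact continuous_norm.comp continuous_fst
      · exact continuous_const.add (continuous_norm.comp continuous_snd)
    have := closure_minimal symBidisc_subset hclosed hmem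
    simp only [Set.mem_setOf_eq, norm_zero, add_zero] at this
    have habs : ‖1 + Complex.I‖ = Real.sqrt 2 := by
      rw [Complex.norm_def, Complex.normSq_apply]
      norm_num
    rw [habs] at this
    nlinarith [Real.sq_sqrt (by norm_num : (2:ℝ) ≥ 0), Real.sqrt_nonneg 2]
  have h4 : (((1 : ℂ) + Complex.I), (0 : ℂ)) =
      (1 / 2 : ℝ) • (((2 : ℂ), (1 : ℂ)) : ℂ × ℂ)
        + (1 / 2 : ℝ) • (((2 * Complex.I), (-1 : ℂ)) : ℂ × ℂ) := by
    refine Prod.ext ?_ ?_ <;> simp [Complex.real_smul] <;> push_cast <;> ring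
  refine ⟨h1, h2, h3, h4, ?_⟩
  intro hconv
  have := hconv.closure h1 h2 (by norm_num : (0:ℝ) ≤ 1/2) (by norm_num : (0:ℝ) ≤ 1/2)
    (by norm_num)
  rw [← h4] at this
  exact h3 this
end

section
/- In the setup below, S^d((0,0)) ≥ r/2; that is, there exists r' ≥ r/2 such that for every 0 < s < r' there is an injective holomorphic map f : D → Ω with f(0,0) = (0,0) and Ω^{(1,2)}(s) ⊆ f(D) (indeed the inclusion map of D into Ω works, since Ω^{(1,2)}(r/2) ⊆ D). -/
noncomputable section

/-- `Ω`, the convex hull of the symmetrized bidisc. -/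
def hullG2 : Set (ℂ × ℂ) := convexHull ℝ symBidisc

/-- The `(1,2)`-Minkowski function of a set `Ω ⊆ ℂ²`:
`h_{d,Ω}(z) = inf {t > 0 : (z₁/t, z₂/t²) ∈ Ω}`. -/
def hMink12 (Ω : Set (ℂ × ℂ)) (z : ℂ × ℂ) : ℝ :=
  sInf {t : ℝ | 0 < t ∧ (z.1 / (t : ℂ), z.2 / (t : ℂ) ^ 2) ∈ Ω}

/-- `Ω^{(1,2)}(s) = {z : h_{(1,2),Ω}(z) < s}`. -/
def sublevel12 (Ω : Set (ℂ × ℂ)) (s : ℝ) : Set (ℂ × ℂ) := {z | hMink12 Ω z < s}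

/-- The set of squeezing parameters: `s > 0` such that there is an injective holomorphic
map `f : D → Ω` with `f z = 0` and `Ω^{(1,2)}(s) ⊆ f(D)`. -/
def sqSet12 (D Ω : Set (ℂ × ℂ)) (z : ℂ × ℂ) : Set ℝ :=
  {s : ℝ | 0 < s ∧ ∃ f : ℂ × ℂ → ℂ × ℂ, DifferentiableOn ℂ f D ∧ Set.InjOn f D ∧
      f '' D ⊆ Ω ∧ f z = 0 ∧ sublevel12 Ω s ⊆ f '' D}

/-- The `(1,2)`-balanced squeezing function `S_{(1,2),D}^Ω`. -/
def squeeze12 (D Ω : Set (ℂ × ℂ)) (z : ℂ × ℂ) : ℝ := sSup (sqSet12 D Ω z)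

/-- `K = ∂(𝔻(0,r) × 𝔻(0,r)) \ B((0,r), ε)`. -/
def Kset (r ε : ℝ) : Set (ℂ × ℂ) :=
  frontier (Metric.ball (0 : ℂ) r ×ˢ Metric.ball (0 : ℂ) r) \
    Metric.ball (((0 : ℂ), (r : ℂ)) : ℂ × ℂ) ε

/-- `D = Ω \ K`. -/
def Dset (r ε : ℝ) : Set (ℂ × ℂ) := hullG2 \ Kset r ε


/-- `Ω` is contained in the "rectangle" `{|z₁| ≤ 2, |z₂| ≤ 1}`. -/
lemma hull_sub : hullG2 ⊆ {p : ℂ × ℂ | ‖p.1‖ ≤ 2 ∧ ‖p.2‖ ≤ 1} := by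
  apply convexHull_min
  · rintro p ⟨z, w, hz, hw, rfl⟩
    refine ⟨?_, ?_⟩
    · calc ‖z + w‖ ≤ ‖z‖ + ‖w‖ := norm_add_le z w
        _ ≤ 2 := by linarith
    · calc ‖z * w‖ = ‖z‖ * ‖w‖ := norm_mul _ _
        _ ≤ 1 := mul_le_one₀ hz.le (norm_nonneg w) hw.le
  · rintro p ⟨hp1, hp2⟩ q ⟨hq1, hq2⟩ a b ha hb hab
    constructor
    · calc ‖(a • p + b • q).1‖ = ‖a • p.1 + b • q.1‖ := by
            rfl
        _ ≤ ‖a • p.1‖ + ‖b • q.1‖ := norm_add_le _ _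
        _ = a * ‖p.1‖ + b * ‖q.1‖ := by
            rw [norm_smul, norm_smul, Real.norm_of_nonneg ha, Real.norm_of_nonneg hb]
        _ ≤ a * 2 + b * 2 := by
            gcongr
        _ = 2 := by linarith
    · calc ‖(a • p + b • q).2‖ = ‖a • p.2 + b • q.2‖ := by
            rfl
        _ ≤ ‖a • p.2‖ + ‖b • q.2‖ := norm_add_le _ _
        _ = a * ‖p.2‖ + b * ‖q.2‖ := by
            rw [norm_smul, norm_smul, Real.norm_of_nonneg ha, Real.norm_of_nonneg hb]
        _ ≤ a * 1 + b * 1 := by gcongr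
        _ = 1 := by linarith

/-- `Ω` is `(1,2)`-balanced (for real scalars in `[0,1]`). -/
lemma hull_balanced {t : ℝ} (ht0 : 0 ≤ t) (ht1 : t ≤ 1) {p : ℂ × ℂ} (hp : p ∈ hullG2) :
    ((t : ℂ) * p.1, (t : ℂ) ^ 2 * p.2) ∈ hullG2 := by
  set L : (ℂ × ℂ) →ₗ[ℂ] ℂ × ℂ :=
    { toFun := fun q => ((t : ℂ) * q.1, (t : ℂ) ^ 2 * q.2)
      map_add' := by intro x y; simp [Prod.ext_iff]; constructor <;> ring
      map_smul' := by intro c x; simp [Prod.ext_iff, Prod.smul_def, smul_eq_mul]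
                      constructor <;> ring } with hL
  have key : hullG2 ⊆ L ⁻¹' hullG2 := by
    apply convexHull_min
    · rintro q ⟨z, w, hz, hw, rfl⟩
      refine subset_convexHull ℝ symBidisc ⟨(t : ℂ) * z, (t : ℂ) * w, ?_, ?_, ?_⟩
      · calc ‖(t : ℂ) * z‖ = t * ‖z‖ := by
              rw [norm_mul, Complex.norm_of_nonneg ht0]
          _ ≤ 1 * ‖z‖ := by gcongr
          _ < 1 := by simpa using hz
      · calc ‖(t : ℂ) * w‖ = t * ‖w‖ := by
              rw [norm_mul, Complex.norm_of_nonneg ht0]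
          _ ≤ 1 * ‖w‖ := by gcongr
          _ < 1 := by simpa using hw
      · simp only [hL, LinearMap.coe_mk, AddHom.coe_mk, Prod.ext_iff]
        constructor <;> ring_nf <;> rfl
    · exact (convex_convexHull ℝ symBidisc).linear_preimage (L.restrictScalars ℝ)
  exact key hp

/-- The defining set of `hMink12 hullG2 z` is nonempty. -/
lemma mink_nonempty (r : ℝ) (hr0 : 0 < r)
    (hbid : {p : ℂ × ℂ | ‖p.1‖ ≤ r ∧ ‖p.2‖ ≤ r} ⊆ hullG2)
    (z : ℂ × ℂ) :
    {t : ℝ | 0 < t ∧ (z.1 / (t : ℂ), z.2 / (t : ℂ) ^ 2) ∈ hullG2}.Nonempty := by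
  set t : ℝ := max 1 ((‖z.1‖ + ‖z.2‖) / r) with ht
  have ht1 : 1 ≤ t := le_max_left _ _
  have ht0 : 0 < t := lt_of_lt_of_le one_pos ht1
  have htr : ‖z.1‖ + ‖z.2‖ ≤ r * t := by
    have := le_max_right 1 ((‖z.1‖ + ‖z.2‖) / r)
    calc ‖z.1‖ + ‖z.2‖
        = (‖z.1‖ + ‖z.2‖) / r * r := by field_simp
      _ ≤ t * r := by gcongr
      _ = r * t := mul_comm _ _
  refine ⟨t, ht0, hbid ⟨?_, ?_⟩⟩
  · show ‖z.1 / (t : ℂ)‖ ≤ r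
    rw [norm_div, Complex.norm_of_nonneg ht0.le, div_le_iff₀ ht0]
    have := norm_nonneg z.2
    linarith
  · show ‖z.2 / (t : ℂ) ^ 2‖ ≤ r
    rw [norm_div, norm_pow, Complex.norm_of_nonneg ht0.le, div_le_iff₀ (by positivity)]
    have h1 : ‖z.2‖ ≤ r * t := by
      have := norm_nonneg z.1; linarith
    have h2 : t ≤ t ^ 2 := by nlinarith
    calc ‖z.2‖ ≤ r * t := h1
      _ ≤ r * t ^ 2 := by gcongr

lemma sublevel_subset_Dset (r ε : ℝ) (hr0 : 0 < r) (hr1 : r < 1)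
    (hbid : {p : ℂ × ℂ | ‖p.1‖ ≤ r ∧ ‖p.2‖ ≤ r} ⊆ hullG2) :
    sublevel12 hullG2 (r / 2) ⊆ Dset r ε := by
  intro z hz
  have hne := mink_nonempty r hr0 hbid z
  have hbdd : BddBelow {t : ℝ | 0 < t ∧ (z.1 / (t : ℂ), z.2 / (t : ℂ) ^ 2) ∈ hullG2} :=
    ⟨0, fun x hx => hx.1.le⟩
  have : hMink12 hullG2 z < r / 2 := hz
  rw [hMink12] at this
  obtain ⟨t, ⟨ht0, htΩ⟩, htlt⟩ := (csInf_lt_iff hbdd hne).mp this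
  have htne : (t : ℂ) ≠ 0 := by exact_mod_cast ht0.ne'
  have ht1 : t ≤ 1 := by linarith
  -- z = (t * (z₁/t), t² * (z₂/t²))
  have hz1 : (t : ℂ) * (z.1 / (t : ℂ)) = z.1 := by field_simp
  have hz2 : (t : ℂ) ^ 2 * (z.2 / (t : ℂ) ^ 2) = z.2 := by field_simp
  have hzΩ : z ∈ hullG2 := by
    have := hull_balanced ht0.le ht1 htΩ
    simpa only [hz1, hz2] using this
  refine ⟨hzΩ, ?_⟩
  -- z is in the open polydisc, hence not in the frontier, hence not in K
  rintro ⟨hfr, -⟩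
  obtain ⟨ha1, ha2⟩ := hull_sub htΩ
  have hb1 : ‖z.1‖ < r := by
    calc ‖z.1‖ = ‖(t : ℂ) * (z.1 / (t : ℂ))‖ := by rw [hz1]
      _ = t * ‖z.1 / (t : ℂ)‖ := by
          rw [norm_mul, Complex.norm_of_nonneg ht0.le]
      _ ≤ t * 2 := by gcongr
      _ < r := by linarith
  have hb2 : ‖z.2‖ < r := by
    have ht2 : t ^ 2 < r := by nlinarith
    calc ‖z.2‖ = ‖(t : ℂ) ^ 2 * (z.2 / (t : ℂ) ^ 2)‖ := by rw [hz2]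
      _ = t ^ 2 * ‖z.2 / (t : ℂ) ^ 2‖ := by
          rw [norm_mul, norm_pow, Complex.norm_of_nonneg ht0.le]
      _ ≤ t ^ 2 * 1 := by gcongr
      _ < r := by linarith
  have hopen : IsOpen (Metric.ball (0 : ℂ) r ×ˢ Metric.ball (0 : ℂ) r) :=
    Metric.isOpen_ball.prod Metric.isOpen_ball
  have hmem : z ∈ Metric.ball (0 : ℂ) r ×ˢ Metric.ball (0 : ℂ) r := by
    constructor
    · simpa [Metric.mem_ball, Complex.dist_eq] using hb1
    · simpa [Metric.mem_ball, Complex.dist_eq] using hb2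
  rw [hopen.frontier_eq] at hfr
  exact hfr.2 hmem

lemma sq_bddAbove (r ε : ℝ) (hr0 : 0 < r)
    (hbid : {p : ℂ × ℂ | ‖p.1‖ ≤ r ∧ ‖p.2‖ ≤ r} ⊆ hullG2) :
    BddAbove (sqSet12 (Dset r ε) hullG2 (0, 0)) := by
  refine ⟨3 / r, ?_⟩
  rintro s ⟨hs0, f, -, -, hfΩ, -, hsub⟩
  by_contra hgt
  push_neg at hgt
  set P : ℂ × ℂ := ((3 : ℂ), (0 : ℂ)) with hP
  have hPmem : (3 / r : ℝ) ∈ {t : ℝ | 0 < t ∧ (P.1 / (t : ℂ), P.2 / (t : ℂ) ^ 2) ∈ hullG2} := by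
    refine ⟨by positivity, hbid ⟨?_, ?_⟩⟩
    · show ‖P.1 / ((3 / r : ℝ) : ℂ)‖ ≤ r
      have : (P.1 / ((3 / r : ℝ) : ℂ)) = (r : ℂ) := by
        push_cast
        field_simp
        rw [hP]
      rw [this, Complex.norm_of_nonneg hr0.le]
    · show ‖P.2 / ((3 / r : ℝ) : ℂ) ^ 2‖ ≤ r
      have hne : (((3 / r : ℝ) : ℂ)) ≠ 0 := by
        exact_mod_cast (show (3 / r : ℝ) ≠ 0 by positivity)
      simp [hP, hr0.le]
  have hmink : hMink12 hullG2 P ≤ 3 / r := csInf_le ⟨0, fun x hx => hx.1.le⟩ hPmem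
  have hPsub : P ∈ sublevel12 hullG2 s := lt_of_le_of_lt hmink hgt
  have hPΩ : P ∈ hullG2 := hfΩ (hsub hPsub)
  have := (hull_sub hPΩ).1
  simp [hP] at this
  norm_num at this


/-- In the setup of the paper, `S^d((0,0)) ≥ r/2`; indeed the inclusion map of `D` into
`Ω` works, since `Ω^{(1,2)}(r/2) ⊆ D`. -/
theorem squeeze12_zero_ge (r ε : ℝ) (hr0 : 0 < r) (hr1 : r < 1)
    (hbid : {p : ℂ × ℂ | ‖p.1‖ ≤ r ∧ ‖p.2‖ ≤ r} ⊆ hullG2)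
    (hε0 : 0 < ε) (hεr : ε < r)
    (hball : Metric.ball (((0 : ℂ), (r : ℂ)) : ℂ × ℂ) ε ⊆ hullG2) :
    r / 2 ≤ squeeze12 (Dset r ε) hullG2 (0, 0) ∧
      sublevel12 hullG2 (r / 2) ⊆ Dset r ε := by
  have hincl := sublevel_subset_Dset r ε hr0 hr1 hbid
  refine ⟨?_, hincl⟩
  apply le_csSup (sq_bddAbove r ε hr0 hbid)
  refine ⟨by positivity, id, differentiableOn_id, Set.injOn_id _, ?_, rfl, ?_⟩
  · rw [Set.image_id]; exact Set.diff_subset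
  · rw [Set.image_id]; exact hincl


end
end

section
/- Let 0 < r < 1, let z₁ ∈ ℂ with 0 < |z₁| < r, let w₀ = (r/|z₁|)·z₁, and let τ ∈ ℂ with |τ| = 1. Setting a = z₁/(2 − τz₁) and b = w₀/(2 − τw₀), one has |(a − b)/(1 − conj(b)·a)| ≤ (r − |z₁|)/(1 − r|z₁|). -/
set_option maxRecDepth 8000 in
/-- Let `0 < r < 1`, `0 < |z₁| < r`, `w₀ = (r/|z₁|)·z₁`, `|τ| = 1`.  With
`a = z₁/(2 − τz₁)` and `b = w₀/(2 − τw₀)`, one has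
`|(a − b)/(1 − conj(b)·a)| ≤ (r − |z₁|)/(1 − r|z₁|)`. -/
theorem pseudoHyperbolic_bound (r : ℝ) (hr0 : 0 < r) (hr1 : r < 1) (z₁ τ w₀ a b : ℂ)
    (hz0 : 0 < ‖z₁‖) (hzr : ‖z₁‖ < r) (hτ : ‖τ‖ = 1)
    (hw₀ : w₀ = ((r / ‖z₁‖ : ℝ) : ℂ) * z₁)
    (ha : a = z₁ / (2 - τ * z₁)) (hb : b = w₀ / (2 - τ * w₀)) :
    ‖(a - b) / (1 - (starRingEnd ℂ) b * a)‖ ≤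
      (r - ‖z₁‖) / (1 - r * ‖z₁‖) := by
  set s := ‖z₁‖ with hsdef
  have hs0 : 0 < s := hz0
  have hs' : (s : ℂ) ≠ 0 := by exact_mod_cast hs0.ne'
  have hw' : w₀ = (r : ℂ) / (s : ℂ) * z₁ := by push_cast at hw₀ ⊢; exact hw₀
  have hwabs : ‖w₀‖ = r := by
    rw [hw₀, norm_mul, Complex.norm_real, Real.norm_eq_abs, abs_of_pos (by positivity)]
    field_simp; exact hsdef.symm
  have hτz : ‖τ * z₁‖ = s := by rw [norm_mul, hτ, one_mul]
  have hτw : ‖τ * w₀‖ = r := by rw [norm_mul, hτ, one_mul, hwabs]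
  have h1 : (2 : ℂ) - τ * z₁ ≠ 0 := by
    intro h
    have h2 : τ * z₁ = 2 := by linear_combination -h
    rw [h2] at hτz
    simp at hτz
    linarith
  have h2 : (2 : ℂ) - τ * w₀ ≠ 0 := by
    intro h
    have h2 : τ * w₀ = 2 := by linear_combination -h
    rw [h2] at hτw
    simp at hτw
    linarith
  have hP0 : 0 < ‖2 - τ * z₁‖ := by
    have tri := norm_add_le (2 - τ * z₁) (τ * z₁)
    simp only [sub_add_cancel] at tri
    rw [hτz] at tri
    have h4 : ‖(2:ℂ)‖ = 2 := by simp
    rw [h4] at tri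
    linarith
  have hQ0 : 0 < ‖2 - τ * w₀‖ := by
    have tri := norm_add_le (2 - τ * w₀) (τ * w₀)
    simp only [sub_add_cancel] at tri
    rw [hτw] at tri
    have h4 : ‖(2:ℂ)‖ = 2 := by simp
    rw [h4] at tri
    linarith
  have hττ : (starRingEnd ℂ) τ * τ = 1 := by
    rw [mul_comm, Complex.mul_conj, Complex.normSq_eq_norm_sq, hτ]
    norm_num
  have hzz : (starRingEnd ℂ) z₁ * z₁ = ((s ^ 2 : ℝ) : ℂ) := by
    rw [mul_comm, Complex.mul_conj, Complex.normSq_eq_norm_sq]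
  have hwz : (starRingEnd ℂ) w₀ * z₁ = ((r * s : ℝ) : ℂ) := by
    rw [hw', map_mul, map_div₀, Complex.conj_ofReal, Complex.conj_ofReal]
    rw [mul_assoc, hzz]
    push_cast
    field_simp
  -- numerator
  have hab : a - b = ((2 * (1 - r / s) : ℝ) : ℂ) * z₁ / ((2 - τ * z₁) * (2 - τ * w₀)) := by
    have hcast : ((2 * (1 - r / s) : ℝ) : ℂ) = 2 * (1 - (r : ℂ) / (s : ℂ)) := by
      rw [Complex.ofReal_mul, Complex.ofReal_sub, Complex.ofReal_div, Complex.ofReal_one,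
        Complex.ofReal_ofNat]
    have hnum : z₁ * (2 - τ * w₀) - (2 - τ * z₁) * w₀ = ((2 * (1 - r / s) : ℝ) : ℂ) * z₁ := by
      rw [hcast]
      linear_combination (-2 : ℂ) * hw'
    rw [ha, hb, div_sub_div _ _ h1 h2, hnum]
  -- denominator
  have h2' : (starRingEnd ℂ) (2 - τ * w₀) ≠ 0 :=
    (map_ne_zero_iff (starRingEnd ℂ) (RingHom.injective _)).mpr h2
  have key : (1 - (starRingEnd ℂ) b * a) * ((starRingEnd ℂ) (2 - τ * w₀) * (2 - τ * z₁)) =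
      4 - 2 * (τ * z₁) - 2 * ((starRingEnd ℂ) (τ * w₀)) := by
    rw [ha, hb, map_div₀, div_mul_div_comm, sub_mul, one_mul,
      div_mul_cancel₀ _ (mul_ne_zero h2' h1)]
    simp only [map_sub, map_mul, map_ofNat]
    linear_combination ((starRingEnd ℂ) w₀ * z₁) * hττ
  have hden : 1 - (starRingEnd ℂ) b * a =
      (4 - 2 * (τ * z₁) - 2 * ((starRingEnd ℂ) (τ * w₀))) /
        ((starRingEnd ℂ) (2 - τ * w₀) * (2 - τ * z₁)) := by
    rw [eq_div_iff (mul_ne_zero h2' h1)]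
    exact key
  have habs_num : ‖a - b‖ =
      2 * (r - s) / (‖2 - τ * z₁‖ * ‖2 - τ * w₀‖) := by
    rw [hab, norm_div, norm_mul, norm_mul, Complex.norm_real, Real.norm_eq_abs, ← hsdef]
    have h1' : |2 * (1 - r / s)| = 2 * (r / s - 1) := by
      rw [abs_of_nonpos]
      · ring
      · have : (1:ℝ) ≤ r / s := by rw [le_div_iff₀ hs0]; linarith
        linarith
    rw [h1']
    congr 1
    field_simp
  have hDlow : 2 * (1 - r * s) ≤
      ‖4 - 2 * (τ * z₁) - 2 * ((starRingEnd ℂ) (τ * w₀))‖ := by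
    have tri := norm_add_le (4 - 2 * (τ * z₁) - 2 * ((starRingEnd ℂ) (τ * w₀)))
      (2 * (τ * z₁) + 2 * ((starRingEnd ℂ) (τ * w₀)))
    have he : (4 - 2 * (τ * z₁) - 2 * ((starRingEnd ℂ) (τ * w₀))) +
        (2 * (τ * z₁) + 2 * ((starRingEnd ℂ) (τ * w₀))) = 4 := by ring
    rw [he] at tri
    have h4 : ‖(4:ℂ)‖ = 4 := by norm_num
    rw [h4] at tri
    have tri2 := norm_add_le (2 * (τ * z₁)) (2 * ((starRingEnd ℂ) (τ * w₀)))
    have e1 : ‖2 * (τ * z₁)‖ = 2 * s := by rw [norm_mul, hτz]; norm_num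
    have e2 : ‖2 * ((starRingEnd ℂ) (τ * w₀))‖ = 2 * r := by
      rw [norm_mul, Complex.norm_conj, hτw]; norm_num
    rw [e1, e2] at tri2
    nlinarith [tri, tri2]
  have habs_den : ‖1 - (starRingEnd ℂ) b * a‖ =
      ‖4 - 2 * (τ * z₁) - 2 * ((starRingEnd ℂ) (τ * w₀))‖ /
        (‖2 - τ * w₀‖ * ‖2 - τ * z₁‖) := by
    rw [hden, norm_div]
    congr 1
    rw [norm_mul, Complex.norm_conj]
  have hrs : 0 < 1 - r * s := by nlinarith
  have hDpos : 0 < ‖4 - 2 * (τ * z₁) - 2 * ((starRingEnd ℂ) (τ * w₀))‖ := by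
    linarith
  rw [norm_div, habs_num, habs_den]
  set P := ‖2 - τ * z₁‖ with hP
  set Q := ‖2 - τ * w₀‖ with hQ
  set Dv := ‖4 - 2 * (τ * z₁) - 2 * ((starRingEnd ℂ) (τ * w₀))‖ with hD
  have e : 2 * (r - s) / (P * Q) / (Dv / (Q * P)) = 2 * (r - s) / Dv := by
    field_simp
  rw [e, div_le_div_iff₀ hDpos hrs]
  nlinarith [hDlow, hzr]
end

section
/- Let n ≥ 2, let d = (d₁,…,dₙ) ∈ (ℤ₊)ⁿ, and let Ω ⊆ ℂⁿ be a bounded, convex, d-balanced, homogeneous domain (i.e., for all p, q ∈ Ω there exists a biholomorphism g of Ω onto itself with g(p) = q). Let K ⊆ Ω be compact such that D = Ω ∖ K is connected and nonempty. Then for every z ∈ D, min_{w ∈ K} ρ_Ω(z, w) ≤ S_{d,D}^Ω(z). -/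
noncomputable section

/-- The `d`-Minkowski function of `Ω ⊆ ℂⁿ`:
`h_{d,Ω}(z) = inf {t > 0 : (z₁/t^{d₁}, …, zₙ/t^{dₙ}) ∈ Ω}`. -/
def dMinkowski (n : ℕ) (d : Fin n → ℕ) (Ω : Set (Fin n → ℂ)) (z : Fin n → ℂ) : ℝ :=
  sInf {t : ℝ | 0 < t ∧ (fun i => z i / (t : ℂ) ^ (d i)) ∈ Ω}

/-- `Ω^d(s) = {z : h_{d,Ω}(z) < s}`. -/
def dSublevel (n : ℕ) (d : Fin n → ℕ) (Ω : Set (Fin n → ℂ)) (s : ℝ) :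
    Set (Fin n → ℂ) :=
  {z | dMinkowski n d Ω z < s}

/-- The `d`-balanced squeezing function `S_{d,D}^Ω(z)`: the supremum of all `s > 0` such
that there is an injective holomorphic map `f : D → Ω` with `f z = 0` and
`Ω^d(s) ⊆ f(D)`. -/
def dSqueeze (n : ℕ) (d : Fin n → ℕ) (D Ω : Set (Fin n → ℂ)) (z : Fin n → ℂ) : ℝ :=
  sSup {s : ℝ | 0 < s ∧ ∃ f : (Fin n → ℂ) → (Fin n → ℂ), DifferentiableOn ℂ f D ∧
      Set.InjOn f D ∧ f '' D ⊆ Ω ∧ f z = 0 ∧ dSublevel n d Ω s ⊆ f '' D}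

/-- `ρ_Ω(z,w)`, the supremum of the pseudo-hyperbolic distances `|f(z) ⊖ f(w)|` over all
holomorphic `f : Ω → 𝔻`; it equals `tanh` of the Carathéodory pseudodistance of `Ω`. -/
def caraRho (n : ℕ) (Ω : Set (Fin n → ℂ)) (z w : Fin n → ℂ) : ℝ :=
  sSup {t : ℝ | ∃ f : (Fin n → ℂ) → ℂ, DifferentiableOn ℂ f Ω ∧
      (∀ x ∈ Ω, ‖f x‖ < 1) ∧
      t = ‖(f z - f w) / (1 - (starRingEnd ℂ) (f w) * f z)‖}



open Metric

lemma one_sub_conj_mul_ne (a b : ℂ) (ha : ‖a‖ < 1) (hb : ‖b‖ < 1) :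
    (1 : ℂ) - (starRingEnd ℂ) a * b ≠ 0 := by
  intro h
  rw [sub_eq_zero] at h
  have h1 : ‖(starRingEnd ℂ) a * b‖ = 1 := by rw [← h]; simp
  rw [norm_mul, Complex.norm_conj] at h1
  nlinarith [norm_nonneg a, norm_nonneg b]

lemma normSq_mobius_lt (a w : ℂ) (ha : ‖a‖ < 1) (hw : ‖w‖ < 1) :
    Complex.normSq (w - a) < Complex.normSq (1 - (starRingEnd ℂ) a * w) := by
  have ha' : Complex.normSq a < 1 := by
    rw [← Complex.sq_norm]; nlinarith [norm_nonneg a]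
  have hw' : Complex.normSq w < 1 := by
    rw [← Complex.sq_norm]; nlinarith [norm_nonneg w]
  rw [Complex.normSq_apply, Complex.normSq_apply] at *
  simp only [Complex.sub_re, Complex.sub_im, Complex.mul_re, Complex.mul_im,
    Complex.one_re, Complex.one_im, Complex.conj_re, Complex.conj_im] at *
  nlinarith [ha', hw', mul_pos (sub_pos.2 ha') (sub_pos.2 hw')]

lemma mobius_lt_one (a w : ℂ) (ha : ‖a‖ < 1) (hw : ‖w‖ < 1) :
    ‖(w - a) / (1 - (starRingEnd ℂ) a * w)‖ < 1 := by
  have key := normSq_mobius_lt a w ha hw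
  have hden : (1 : ℂ) - (starRingEnd ℂ) a * w ≠ 0 := one_sub_conj_mul_ne a w ha hw
  have habs : ‖w - a‖ < ‖1 - (starRingEnd ℂ) a * w‖ := by
    rw [Complex.norm_def, Complex.norm_def]
    exact Real.sqrt_lt_sqrt (Complex.normSq_nonneg _) key
  rw [norm_div, div_lt_one (norm_pos_iff.2 hden)]
  exact habs

/-- Schwarz–Pick inequality in the form we need. -/
lemma schwarzPick {G : ℂ → ℂ} (hG : DifferentiableOn ℂ G (ball 0 1))
    (hb : ∀ x ∈ ball (0:ℂ) 1, ‖G x‖ < 1) {τ : ℝ} (hτ0 : 0 ≤ τ) (hτ1 : τ < 1) :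
    ‖(G 0 - G (τ:ℂ)) / (1 - (starRingEnd ℂ) (G (τ:ℂ)) * G 0)‖ ≤ τ := by
  have h0m : (0:ℂ) ∈ ball (0:ℂ) 1 := by simp
  have hτm : (τ:ℂ) ∈ ball (0:ℂ) 1 := by
    simp [Complex.norm_real, abs_of_nonneg hτ0, hτ1, mem_ball_zero_iff]
  have hG0 : ‖G 0‖ < 1 := hb _ h0m
  set H : ℂ → ℂ := fun ζ => (G ζ - G 0) / (1 - (starRingEnd ℂ) (G 0) * G ζ) with hH
  have hHd : DifferentiableOn ℂ H (ball 0 1) := by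
    apply DifferentiableOn.div
    · exact hG.sub (differentiableOn_const _)
    · exact (differentiableOn_const _).sub ((differentiableOn_const _).mul hG)
    · intro x hx
      exact one_sub_conj_mul_ne _ _ hG0 (hb x hx)
  have hHm : Set.MapsTo H (ball 0 1) (ball 0 1) := by
    intro x hx
    rw [mem_ball_zero_iff]
    exact mobius_lt_one _ _ hG0 (hb x hx)
  have hH0 : H 0 = 0 := by simp [hH]
  have key : ‖H (τ:ℂ)‖ ≤ ‖(τ:ℂ)‖ :=
    Complex.norm_le_norm_of_mapsTo_ball hHd (hHm.mono_right ball_subset_closedBall) hH0 (by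
      simpa [Complex.norm_real, abs_of_nonneg hτ0] using hτ1)
  have hsym : ‖(G 0 - G (τ:ℂ)) / (1 - (starRingEnd ℂ) (G (τ:ℂ)) * G 0)‖
      = ‖H (τ:ℂ)‖ := by
    rw [hH]
    simp only [norm_div]
    have e1 : ‖G 0 - G (τ:ℂ)‖ = ‖G (τ:ℂ) - G 0‖ :=
      norm_sub_rev _ _
    have e2 : ‖1 - (starRingEnd ℂ) (G (τ:ℂ)) * G 0‖
        = ‖1 - (starRingEnd ℂ) (G 0) * G (τ:ℂ)‖ := by
      rw [← Complex.norm_conj (1 - (starRingEnd ℂ) (G 0) * G (τ:ℂ))]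
      congr 1
      simp only [map_sub, map_one, map_mul, Complex.conj_conj]
      ring
    rw [e1, e2]
  rw [hsym] at *
  calc ‖H (τ:ℂ)‖ ≤ ‖(τ:ℂ)‖ := key
    _ = τ := by simp [Complex.norm_real, abs_of_nonneg hτ0]

variable {n : ℕ} {d : Fin n → ℕ} {Ω : Set (Fin n → ℂ)}

lemma dMink_bddBelow (x : Fin n → ℂ) :
    BddBelow {t : ℝ | 0 < t ∧ (fun i => x i / (t : ℂ) ^ (d i)) ∈ Ω} :=
  ⟨0, fun t ht => ht.1.le⟩

lemma dMink_nonneg (x : Fin n → ℂ) : 0 ≤ dMinkowski n d Ω x :=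
  Real.sInf_nonneg (fun t ht => ht.1.le)

lemma dMink_set_nonempty (hd : ∀ i, 0 < d i) (hΩopen : IsOpen Ω) (h0 : (0 : Fin n → ℂ) ∈ Ω) (x : Fin n → ℂ) :
    {t : ℝ | 0 < t ∧ (fun i => x i / (t : ℂ) ^ (d i)) ∈ Ω}.Nonempty := by
  obtain ⟨ε, hε, hball⟩ := Metric.isOpen_iff.1 hΩopen 0 h0
  set t : ℝ := max 1 ((‖x‖ + 1) / ε) with ht
  have ht1 : (1:ℝ) ≤ t := le_max_left _ _
  have ht0 : (0:ℝ) < t := lt_of_lt_of_le one_pos ht1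
  refine ⟨t, ht0, hball ?_⟩
  rw [mem_ball_zero_iff]
  rw [pi_norm_lt_iff hε]
  intro i
  have htd : (t:ℝ) ≤ t ^ (d i) := le_self_pow₀ ht1 (hd i).ne'
  have hpow : (0:ℝ) < t ^ (d i) := pow_pos ht0 _
  have hnorm : ‖x i / (t : ℂ) ^ (d i)‖ = ‖x i‖ / t ^ (d i) := by
    rw [norm_div, norm_pow, Complex.norm_real]
    simp [abs_of_pos ht0]
  rw [hnorm]
  rw [div_lt_iff₀ hpow]
  have h1 : ‖x i‖ ≤ ‖x‖ := norm_le_pi_norm x i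
  have h2 : ‖x‖ + 1 ≤ ε * t := by
    have : (‖x‖ + 1) / ε ≤ t := le_max_right _ _
    calc ‖x‖ + 1 = ε * ((‖x‖ + 1) / ε) := by field_simp
      _ ≤ ε * t := by nlinarith
  have h3 : ε * t ≤ ε * t ^ (d i) := by nlinarith
  nlinarith [norm_nonneg (x i)]

lemma dMink_lt_one (hΩopen : IsOpen Ω) {y : Fin n → ℂ} (hy : y ∈ Ω) :
    dMinkowski n d Ω y < 1 := by
  set ψ : ℝ → (Fin n → ℂ) := fun t => fun i => y i / (t : ℂ) ^ (d i) with hψ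
  have hcont : ContinuousAt ψ 1 := by
    rw [hψ]
    apply continuousAt_pi.2
    intro i
    apply ContinuousAt.div continuousAt_const
    · exact (Complex.continuous_ofReal.continuousAt).pow _
    · simp
  have hψ1 : ψ 1 = y := by
    funext i; simp [hψ]
  have hmem : ψ ⁻¹' Ω ∈ nhds (1:ℝ) := hcont.preimage_mem_nhds (hΩopen.mem_nhds (hψ1 ▸ hy))
  obtain ⟨ε, hε, hball⟩ := Metric.mem_nhds_iff.1 hmem
  set t : ℝ := max (1 - ε/2) (1/2) with ht
  have ht0 : 0 < t := lt_of_lt_of_le one_half_pos (le_max_right _ _)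
  have ht1 : t < 1 := by
    apply max_lt <;> linarith
  have htb : t ∈ ball (1:ℝ) ε := by
    rw [mem_ball, Real.dist_eq, abs_of_nonpos (by linarith)]
    have : 1 - ε/2 ≤ t := le_max_left _ _
    linarith
  have : t ∈ {t : ℝ | 0 < t ∧ (fun i => y i / (t : ℂ) ^ (d i)) ∈ Ω} :=
    ⟨ht0, hball htb⟩
  exact lt_of_le_of_lt (csInf_le (dMink_bddBelow y) this) ht1

lemma mem_of_scale (hd : ∀ i, 0 < d i)
    (hΩbal : ∀ z ∈ Ω, ∀ lam : ℂ, ‖lam‖ ≤ 1 → (fun i => lam ^ (d i) * z i) ∈ Ω)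
    {x : Fin n → ℂ} {t : ℝ} (ht0 : 0 < t) (ht1 : t ≤ 1)
    (hx : (fun i => x i / (t : ℂ) ^ (d i)) ∈ Ω) : x ∈ Ω := by
  have := hΩbal _ hx (t : ℂ) (by
    rw [Complex.norm_real, Real.norm_eq_abs, abs_of_pos ht0]; exact ht1)
  have he : (fun i => (t:ℂ) ^ (d i) * (x i / (t : ℂ) ^ (d i))) = x := by
    funext i
    have : ((t:ℝ):ℂ) ≠ 0 := Complex.ofReal_ne_zero.2 ht0.ne'
    field_simp
  rwa [he] at this

lemma dMink_scale_le {y : Fin n → ℂ} (hy : y ∈ Ω) {t : ℝ} (ht0 : 0 < t) :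
    dMinkowski n d Ω (fun i => (t : ℂ) ^ (d i) * y i) ≤ t := by
  apply csInf_le (dMink_bddBelow _)
  refine ⟨ht0, ?_⟩
  have he : (fun i => ((t:ℂ) ^ (d i) * y i) / (t : ℂ) ^ (d i)) = y := by
    funext i
    have : ((t:ℝ):ℂ) ≠ 0 := Complex.ofReal_ne_zero.2 ht0.ne'
    field_simp
  rw [he]; exact hy

lemma dMink_lower (hd : ∀ i, 0 < d i) {R : ℝ} (hR0 : 0 < R)
    (hR : ∀ x ∈ Ω, ‖x‖ ≤ R) {x : Fin n → ℂ} (i : Fin n) {t : ℝ} (ht0 : 0 < t)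
    (hx : (fun j => x j / (t : ℂ) ^ (d j)) ∈ Ω) :
    min 1 (‖x i‖ / R) ≤ t := by
  rcases le_or_gt t 1 with ht1 | ht1
  · -- t ≤ 1 : t^{d i} ≤ t, ‖x i‖ ≤ R t^{d i} ≤ R t
    have h1 : ‖x i / (t : ℂ) ^ (d i)‖ ≤ R :=
      le_trans (by simpa using norm_le_pi_norm (fun j => x j / (t : ℂ) ^ (d j)) i) (hR _ hx)
    have hnorm : ‖x i / (t : ℂ) ^ (d i)‖ = ‖x i‖ / t ^ (d i) := by
      rw [norm_div, norm_pow, Complex.norm_real]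
      simp [abs_of_pos ht0]
    rw [hnorm] at h1
    have hpow : (0:ℝ) < t ^ (d i) := pow_pos ht0 _
    have h2 : ‖x i‖ ≤ R * t ^ (d i) := by
      rw [div_le_iff₀ hpow] at h1; linarith
    have h3 : t ^ (d i) ≤ t := pow_le_of_le_one ht0.le ht1 (hd i).ne'
    have h4 : ‖x i‖ ≤ R * t := by nlinarith
    have h5 : ‖x i‖ / R ≤ t := by rw [div_le_iff₀ hR0]; linarith
    exact le_trans (min_le_right _ _) h5
  · exact le_trans (min_le_left _ _) ht1.le


/-- Lower estimate of the `d`-balanced squeezing function: for a bounded, convex,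
`d`-balanced, homogeneous domain `Ω ⊆ ℂⁿ` and a nonempty compact `K ⊆ Ω` with
`D = Ω \ K` connected, `min_{w ∈ K} ρ_Ω(z,w) ≤ S_{d,D}^Ω(z)` for all `z ∈ D`. -/
theorem min_caraRho_le_dSqueeze (n : ℕ) (hn : 2 ≤ n) (d : Fin n → ℕ)
    (hd : ∀ i, 0 < d i)
    (Ω : Set (Fin n → ℂ)) (hΩopen : IsOpen Ω) (hΩconn : IsConnected Ω)
    (hΩbdd : Bornology.IsBounded Ω) (hΩconv : Convex ℝ Ω)
    (hΩbal : ∀ z ∈ Ω, ∀ lam : ℂ, ‖lam‖ ≤ 1 →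
      (fun i => lam ^ (d i) * z i) ∈ Ω)
    (hΩhom : ∀ p ∈ Ω, ∀ q ∈ Ω, ∃ g g' : (Fin n → ℂ) → (Fin n → ℂ),
      DifferentiableOn ℂ g Ω ∧ DifferentiableOn ℂ g' Ω ∧
      (∀ x ∈ Ω, g x ∈ Ω) ∧ (∀ x ∈ Ω, g' x ∈ Ω) ∧
      (∀ x ∈ Ω, g' (g x) = x) ∧ (∀ x ∈ Ω, g (g' x) = x) ∧ g p = q)
    (K : Set (Fin n → ℂ)) (hK : IsCompact K) (hKne : K.Nonempty) (hKΩ : K ⊆ Ω)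
    (hDconn : IsConnected (Ω \ K)) (z : Fin n → ℂ) (hz : z ∈ Ω \ K) :
    sInf {t : ℝ | ∃ w ∈ K, t = caraRho n Ω z w} ≤ dSqueeze n d (Ω \ K) Ω z := by
  obtain ⟨hzΩ, hzK⟩ := hz
  -- 0 ∈ Ω
  obtain ⟨z₀, hz₀⟩ := hΩconn.nonempty
  have h0 : (0 : Fin n → ℂ) ∈ Ω := by
    have h1 := hΩbal z₀ hz₀ 0 (by simp)
    have he : (fun i => (0:ℂ) ^ (d i) * z₀ i) = 0 := by
      funext i; simp [zero_pow (hd i).ne']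
    rwa [he] at h1
  -- uniform bound R on Ω
  obtain ⟨R₀, hR₀⟩ := hΩbdd.exists_norm_le
  set R := max R₀ 1 with hRdef
  have hR0 : (0:ℝ) < R := lt_of_lt_of_le one_pos (le_max_right _ _)
  have hR : ∀ x ∈ Ω, ‖x‖ ≤ R := fun x hx => le_trans (hR₀ x hx) (le_max_left _ _)
  -- automorphism g with g z = 0
  obtain ⟨g, g', hg, hg', hgm, hg'm, hg'g, hgg', hgz⟩ := hΩhom z hzΩ 0 h0
  -- δ : uniform lower bound on ‖g w‖ for w ∈ K
  have hgK : IsCompact (g '' K) := hK.image_of_continuousOn ((hg.continuousOn).mono hKΩ)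
  have h0n : (0 : Fin n → ℂ) ∉ g '' K := by
    rintro ⟨w, hw, hw0⟩
    have hwz : w = z := by
      have h1 : g' (g w) = w := hg'g w (hKΩ hw)
      have h2 : g' (g z) = z := hg'g z hzΩ
      rw [hw0] at h1; rw [hgz] at h2
      rw [← h1]; exact h2
    exact hzK (hwz ▸ hw)
  obtain ⟨w₁, hw₁⟩ := hKne
  have hgKne : (g '' K).Nonempty := ⟨g w₁, ⟨w₁, hw₁, rfl⟩⟩
  have hδpos : 0 < Metric.infDist 0 (g '' K) :=
    (hgK.isClosed.notMem_iff_infDist_pos hgKne).1 h0n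
  set δ := Metric.infDist (0 : Fin n → ℂ) (g '' K) with hδdef
  have hδle : ∀ w ∈ K, δ ≤ ‖g w‖ := by
    intro w hw
    have h1 := Metric.infDist_le_dist_of_mem (x := (0 : Fin n → ℂ)) (Set.mem_image_of_mem g hw)
    rwa [dist_zero_left] at h1
  set t₀ := min 1 (δ / R) with ht₀def
  have ht₀pos : 0 < t₀ := lt_min one_pos (div_pos hδpos hR0)
  -- lower bound for the Minkowski functional of g w
  have hlow : ∀ w ∈ K, t₀ ≤ dMinkowski n d Ω (g w) := by
    intro w hw
    apply le_csInf (dMink_set_nonempty hd hΩopen h0 _)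
    rintro t ⟨ht, hmem⟩
    have hex : ∃ i, δ ≤ ‖g w i‖ := by
      by_contra hco; push_neg at hco
      exact absurd ((pi_norm_lt_iff hδpos).2 hco) (not_lt.2 (hδle w hw))
    obtain ⟨i, hi⟩ := hex
    have h1 : min 1 (‖g w i‖ / R) ≤ t := dMink_lower hd hR0 hR i ht hmem
    have h2 : δ / R ≤ ‖g w i‖ / R := by gcongr
    calc t₀ ≤ min 1 (‖g w i‖ / R) := min_le_min le_rfl h2
      _ ≤ t := h1
  -- the constant c
  set cset := {r : ℝ | ∃ w ∈ K, r = dMinkowski n d Ω (g w)} with hcsetdef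
  have hcsetne : cset.Nonempty := ⟨dMinkowski n d Ω (g w₁), w₁, hw₁, rfl⟩
  have hcsetbdd : BddBelow cset := ⟨0, by rintro r ⟨w, hw, rfl⟩; exact dMink_nonneg _⟩
  set c := sInf cset with hcdef
  have hc_lb : ∀ w ∈ K, c ≤ dMinkowski n d Ω (g w) := fun w hw => csInf_le hcsetbdd ⟨w, hw, rfl⟩
  have hct₀ : t₀ ≤ c := le_csInf hcsetne (by rintro r ⟨w, hw, rfl⟩; exact hlow w hw)
  have hc0 : 0 < c := lt_of_lt_of_le ht₀pos hct₀
  have hc1 : c < 1 := lt_of_le_of_lt (hc_lb w₁ hw₁) (dMink_lt_one hΩopen (hgm _ (hKΩ hw₁)))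
  -- c belongs to the squeezing set
  have hcmem : c ∈ {s : ℝ | 0 < s ∧ ∃ f : (Fin n → ℂ) → (Fin n → ℂ),
      DifferentiableOn ℂ f (Ω \ K) ∧ Set.InjOn f (Ω \ K) ∧ f '' (Ω \ K) ⊆ Ω ∧ f z = 0 ∧
      dSublevel n d Ω c ⊆ f '' (Ω \ K)} := by
    refine ⟨hc0, g, hg.mono Set.diff_subset, ?_, ?_, hgz, ?_⟩
    · intro x hx y hy hxy
      rw [← hg'g x hx.1, ← hg'g y hy.1, hxy]
    · rintro _ ⟨x, hx, rfl⟩; exact hgm x hx.1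
    · intro x hx
      have hx' : dMinkowski n d Ω x < c := hx
      obtain ⟨t, ⟨ht0, htmem⟩, htc⟩ :=
        (csInf_lt_iff (dMink_bddBelow x) (dMink_set_nonempty hd hΩopen h0 x)).1 hx'
      have hxΩ : x ∈ Ω := mem_of_scale hd hΩbal ht0 (le_of_lt (lt_trans htc hc1)) htmem
      refine ⟨g' x, ⟨hg'm x hxΩ, ?_⟩, hgg' x hxΩ⟩
      intro hK'
      have h1 : c ≤ dMinkowski n d Ω (g (g' x)) := hc_lb _ hK'
      rw [hgg' x hxΩ] at h1
      exact absurd hx' (not_lt.2 h1)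
  -- the squeezing set is bounded above
  obtain ⟨ε, hεpos, hball⟩ := Metric.isOpen_iff.1 hΩopen 0 h0
  set y₀ : Fin n → ℂ := fun _ => ((ε/2 : ℝ) : ℂ) with hy₀def
  have hy₀ : y₀ ∈ Ω := by
    apply hball
    rw [mem_ball_zero_iff, pi_norm_lt_iff hεpos]
    intro i
    simp only [hy₀def, Complex.norm_real, Real.norm_eq_abs]
    rw [abs_of_nonneg (by linarith)]; linarith
  have hn0 : 0 < n := by omega
  set i₀ : Fin n := ⟨0, hn0⟩ with hi₀def
  have hy₀i : ‖y₀ i₀‖ = ε/2 := by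
    simp only [hy₀def, Complex.norm_real, Real.norm_eq_abs]
    exact abs_of_nonneg (by linarith)
  set B := max 1 (R / (ε/2)) with hBdef
  have hbdd : BddAbove {s : ℝ | 0 < s ∧ ∃ f : (Fin n → ℂ) → (Fin n → ℂ),
      DifferentiableOn ℂ f (Ω \ K) ∧ Set.InjOn f (Ω \ K) ∧ f '' (Ω \ K) ⊆ Ω ∧ f z = 0 ∧
      dSublevel n d Ω s ⊆ f '' (Ω \ K)} := by
    refine ⟨B, ?_⟩
    rintro s ⟨hs0, f, hf, hinj, him, hfz, hsub⟩
    by_contra hsB; push_neg at hsB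
    set t := (B + s)/2 with htdef
    have hB1 : (1:ℝ) ≤ B := le_max_left _ _
    have ht1 : 1 < t := by rw [htdef]; linarith
    have htB : B < t := by rw [htdef]; linarith
    have hts : t < s := by rw [htdef]; linarith
    have hp : dMinkowski n d Ω (fun i => (t:ℂ)^(d i) * y₀ i) ≤ t :=
      dMink_scale_le hy₀ (by linarith)
    have hpin : (fun i => (t:ℂ)^(d i) * y₀ i) ∈ dSublevel n d Ω s :=
      lt_of_le_of_lt hp hts
    have hpΩ : (fun i => (t:ℂ)^(d i) * y₀ i) ∈ Ω := him (hsub hpin)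
    have h1 : ‖(t:ℂ)^(d i₀) * y₀ i₀‖ ≤ R :=
      le_trans (by simpa using norm_le_pi_norm (fun i => (t:ℂ)^(d i) * y₀ i) i₀) (hR _ hpΩ)
    have h2 : t ^ (d i₀) * (ε/2) ≤ R := by
      rw [norm_mul, norm_pow, Complex.norm_real, Real.norm_eq_abs, abs_of_nonneg (by linarith : (0:ℝ) ≤ t), hy₀i] at h1
      exact h1
    have h3 : t ≤ t ^ (d i₀) := le_self_pow₀ ht1.le (hd i₀).ne'
    have h4 : t ≤ R / (ε/2) := by
      rw [le_div_iff₀ (by linarith : (0:ℝ) < ε/2)]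
      nlinarith
    have h5 : R / (ε/2) ≤ B := le_max_right _ _
    linarith
  -- the Carathéodory bound : caraRho z w ≤ dMinkowski (g w)
  have key : ∀ w ∈ K, caraRho n Ω z w ≤ dMinkowski n d Ω (g w) := by
    intro w hw
    apply Real.sSup_le _ (dMink_nonneg _)
    rintro r ⟨f, hf, hfb, rfl⟩
    apply le_csInf (dMink_set_nonempty hd hΩopen h0 _)
    rintro τ ⟨hτ0, hτmem⟩
    rcases lt_or_ge τ 1 with hτ1 | hτ1
    · -- Schwarz–Pick through an analytic disc
      set y : Fin n → ℂ := fun i => g w i / (τ:ℂ)^(d i) with hydef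
      have hyΩ : y ∈ Ω := hτmem
      set φ : ℂ → (Fin n → ℂ) := fun ζ => fun i => ζ^(d i) * y i with hφdef
      have hφd : Differentiable ℂ φ := by
        rw [hφdef]
        apply differentiable_pi.2
        intro i
        exact (differentiable_id.pow _).mul_const _
      have hφm : Set.MapsTo φ (ball 0 1) Ω := by
        intro ζ hζ
        exact hΩbal y hyΩ ζ (by
          have := mem_ball_zero_iff.1 hζ
          simpa using this.le)
      set G : ℂ → ℂ := fun ζ => f (g' (φ ζ)) with hGdef
      have hGd : DifferentiableOn ℂ G (ball 0 1) := by
        have h1 : DifferentiableOn ℂ (g' ∘ φ) (ball 0 1) :=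
          DifferentiableOn.comp hg' (hφd.differentiableOn) hφm
        have h2 : Set.MapsTo (g' ∘ φ) (ball 0 1) Ω := fun ζ hζ => hg'm _ (hφm hζ)
        exact DifferentiableOn.comp hf h1 h2
      have hGb : ∀ x ∈ ball (0:ℂ) 1, ‖G x‖ < 1 :=
        fun x hx => hfb _ (hg'm _ (hφm hx))
      have hG0 : G 0 = f z := by
        have hφ0 : φ 0 = 0 := by
          funext i; simp [hφdef, zero_pow (hd i).ne']
        rw [hGdef]; simp only
        rw [hφ0, ← hgz, hg'g z hzΩ]
      have hGτ : G (τ:ℂ) = f w := by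
        have hφτ : φ ((τ:ℝ):ℂ) = g w := by
          funext i
          simp only [hφdef, hydef]
          have hτne : ((τ:ℝ):ℂ) ≠ 0 := Complex.ofReal_ne_zero.2 hτ0.ne'
          field_simp
        rw [hGdef]; simp only
        rw [hφτ, hg'g w (hKΩ hw)]
      have hsp := schwarzPick hGd hGb hτ0.le hτ1
      rw [hG0, hGτ] at hsp
      exact hsp
    · have h1 := mobius_lt_one (f w) (f z) (hfb w (hKΩ hw)) (hfb z hzΩ)
      linarith
  -- conclusion
  have hfinal : sInf {t : ℝ | ∃ w ∈ K, t = caraRho n Ω z w} ≤ c := by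
    apply le_csInf hcsetne
    rintro r ⟨w, hw, rfl⟩
    have hbl : BddBelow {t : ℝ | ∃ w ∈ K, t = caraRho n Ω z w} := by
      refine ⟨0, ?_⟩
      rintro r ⟨w', hw', rfl⟩
      apply Real.sSup_nonneg
      rintro t ⟨f, hf, hfb, rfl⟩
      exact norm_nonneg _
    exact le_trans (csInf_le hbl ⟨w, hw, rfl⟩) (key w hw)
  exact le_trans hfinal (le_csSup hbdd hcmem)

end
end

section
/- Let Ω ⊆ ℂⁿ be a bounded convex domain and let K ⊆ Ω be a compact set with nonempty interior such that D = Ω ∖ K is connected and nonempty. Then for every z ∈ D, min_{w ∈ ∂K} ρ_Ω(z, w) = min_{w ∈ K} ρ_Ω(z, w), where ∂K is the topological boundary of K. -/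
noncomputable section

lemma abs_pseudo_le_one {a b : ℂ} (ha : ‖a‖ < 1) (hb : ‖b‖ < 1) :
    ‖(a - b) / (1 - (starRingEnd ℂ) b * a)‖ ≤ 1 := by
  rw [norm_div]
  have hkey : Complex.normSq (1 - (starRingEnd ℂ) b * a) - Complex.normSq (a - b)
      = (1 - Complex.normSq a) * (1 - Complex.normSq b) := by
    simp [Complex.normSq_apply, Complex.mul_re, Complex.mul_im, Complex.sub_re,
      Complex.sub_im]
    ring
  have hna : Complex.normSq a < 1 := by
    rw [Complex.normSq_eq_norm_sq]; nlinarith [norm_nonneg a]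
  have hnb : Complex.normSq b < 1 := by
    rw [Complex.normSq_eq_norm_sq]; nlinarith [norm_nonneg b]
  have h3 : ‖a - b‖ ≤ ‖1 - (starRingEnd ℂ) b * a‖ := by
    rw [Complex.norm_def, Complex.norm_def]
    apply Real.sqrt_le_sqrt; nlinarith
  exact div_le_one_of_le₀ h3 (norm_nonneg _)

lemma caraRho_bddAbove {n : ℕ} {Ω : Set (Fin n → ℂ)} {z w : Fin n → ℂ}
    (hz : z ∈ Ω) (hw : w ∈ Ω) :
    BddAbove {t : ℝ | ∃ f : (Fin n → ℂ) → ℂ, DifferentiableOn ℂ f Ω ∧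
      (∀ x ∈ Ω, ‖f x‖ < 1) ∧
      t = ‖(f z - f w) / (1 - (starRingEnd ℂ) (f w) * f z)‖} := by
  refine ⟨1, ?_⟩
  rintro t ⟨f, hf, hlt, rfl⟩
  exact abs_pseudo_le_one (hlt z hz) (hlt w hw)

lemma caraRho_zero_mem {n : ℕ} {Ω : Set (Fin n → ℂ)} (z w : Fin n → ℂ) :
    (0 : ℝ) ∈ {t : ℝ | ∃ f : (Fin n → ℂ) → ℂ, DifferentiableOn ℂ f Ω ∧
      (∀ x ∈ Ω, ‖f x‖ < 1) ∧
      t = ‖(f z - f w) / (1 - (starRingEnd ℂ) (f w) * f z)‖} := by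
  refine ⟨fun _ => 0, differentiableOn_const _, fun x _ => by simp, by simp⟩

lemma caraRho_nonneg {n : ℕ} {Ω : Set (Fin n → ℂ)} {z w : Fin n → ℂ}
    (hz : z ∈ Ω) (hw : w ∈ Ω) : 0 ≤ caraRho n Ω z w :=
  le_csSup (caraRho_bddAbove hz hw) (caraRho_zero_mem z w)

lemma caraRho_contract {n : ℕ} {Ω : Set (Fin n → ℂ)} (hΩconv : Convex ℝ Ω)
    {z w : Fin n → ℂ} (hz : z ∈ Ω) (hw : w ∈ Ω) {l : ℝ} (h0 : 0 ≤ l) (h1 : l ≤ 1) :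
    caraRho n Ω z (z + l • (w - z)) ≤ caraRho n Ω z w := by
  set Φ : (Fin n → ℂ) → (Fin n → ℂ) := fun x => z + l • (x - z) with hΦ
  have hmaps : ∀ x ∈ Ω, Φ x ∈ Ω := by
    intro x hx
    have : Φ x = (1 - l) • z + l • x := by
      simp only [hΦ]; module
    rw [this]
    exact hΩconv hz hx (by linarith) h0 (by ring)
  have hΦz : Φ z = z := by simp [hΦ]
  have hΦdiff : Differentiable ℂ Φ := by
    apply (differentiable_const z).add
    exact (differentiable_id.sub_const z).const_smul l
  apply csSup_le_csSup (caraRho_bddAbove hz hw)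
  · exact ⟨0, caraRho_zero_mem z _⟩
  · rintro t ⟨f, hf, hlt, rfl⟩
    refine ⟨f ∘ Φ, hf.comp hΦdiff.differentiableOn hmaps, fun x hx => hlt _ (hmaps x hx), ?_⟩
    simp only [Function.comp_apply, hΦz]
    rfl

lemma exists_frontier_seg {n : ℕ} {K : Set (Fin n → ℂ)} (hK : IsClosed K)
    {z w : Fin n → ℂ} (hw : w ∈ K) (hz : z ∉ K) :
    ∃ l : ℝ, 0 ≤ l ∧ l ≤ 1 ∧ z + l • (w - z) ∈ frontier K := by
  set γ : ℝ → (Fin n → ℂ) := fun l => z + l • (w - z) with hγ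
  have hγcont : Continuous γ := by
    apply continuous_const.add
    exact continuous_id.smul continuous_const
  set T : Set ℝ := {l | l ∈ Set.Icc (0:ℝ) 1 ∧ γ l ∈ K} with hT
  have hγ1 : γ 1 = w := by simp [hγ]
  have hTne : T.Nonempty := ⟨1, ⟨by norm_num, by norm_num⟩, by rw [hγ1]; exact hw⟩
  have hTclosed : IsClosed T := by
    have : T = Set.Icc (0:ℝ) 1 ∩ γ ⁻¹' K := rfl
    rw [this]
    exact isClosed_Icc.inter (hK.preimage hγcont)
  have hTcomp : IsCompact T :=
    isCompact_Icc.of_isClosed_subset hTclosed (fun l hl => hl.1)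
  set l₀ := sInf T with hl₀
  have hmem : l₀ ∈ T := hTcomp.sInf_mem hTne
  have h0 : 0 ≤ l₀ := hmem.1.1
  have h1 : l₀ ≤ 1 := hmem.1.2
  have hpos : 0 < l₀ := by
    rcases h0.lt_or_eq with h | h
    · exact h
    · exfalso; apply hz
      have : γ 0 = z := by simp [hγ]
      rw [← this, h]; exact hmem.2
  refine ⟨l₀, h0, h1, ?_⟩
  rw [hK.frontier_eq]
  refine ⟨hmem.2, ?_⟩
  intro hint
  obtain ⟨δ, hδ, hball⟩ := Metric.mem_nhds_iff.1
    (hγcont.continuousAt.preimage_mem_nhds (isOpen_interior.mem_nhds hint))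
  set l := max 0 (l₀ - δ / 2) with hl
  have hll₀ : l < l₀ := by
    rw [hl]
    apply max_lt hpos (by linarith)
  have hldist : l ∈ Metric.ball l₀ δ := by
    rw [Metric.mem_ball, Real.dist_eq, abs_lt]
    constructor
    · have : l₀ - δ / 2 ≤ l := le_max_right _ _
      linarith
    · linarith
  have hlT : l ∈ T := by
    refine ⟨⟨le_max_left _ _, by linarith⟩, interior_subset (hball hldist)⟩
  have := csInf_le hTcomp.bddBelow hlT
  rw [← hl₀] at this
  linarith


/-- For a bounded convex domain `Ω ⊆ ℂⁿ` and a compact `K ⊆ Ω` with nonempty interior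
such that `D = Ω \ K` is connected and nonempty,
`min_{w ∈ ∂K} ρ_Ω(z,w) = min_{w ∈ K} ρ_Ω(z,w)` for all `z ∈ D`. -/
theorem min_caraRho_frontier_eq (n : ℕ) (Ω : Set (Fin n → ℂ)) (hΩopen : IsOpen Ω)
    (hΩconn : IsConnected Ω) (hΩbdd : Bornology.IsBounded Ω) (hΩconv : Convex ℝ Ω)
    (K : Set (Fin n → ℂ)) (hK : IsCompact K) (hKΩ : K ⊆ Ω)
    (hKint : (interior K).Nonempty) (hDconn : IsConnected (Ω \ K))
    (z : Fin n → ℂ) (hz : z ∈ Ω \ K) :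
    sInf {t : ℝ | ∃ w ∈ frontier K, t = caraRho n Ω z w} =
      sInf {t : ℝ | ∃ w ∈ K, t = caraRho n Ω z w} := by
  obtain ⟨hzΩ, hzK⟩ := hz
  have hfK : frontier K ⊆ K := hK.isClosed.frontier_subset
  have key : ∀ w ∈ K, ∃ w' ∈ frontier K, caraRho n Ω z w' ≤ caraRho n Ω z w := by
    intro w hw
    obtain ⟨l, h0, h1, hfr⟩ := exists_frontier_seg hK.isClosed hw hzK
    exact ⟨_, hfr, caraRho_contract hΩconv hzΩ (hKΩ hw) h0 h1⟩
  obtain ⟨w₀, hw₀⟩ := hKint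
  have hw₀K : w₀ ∈ K := interior_subset hw₀
  set A := {t : ℝ | ∃ w ∈ frontier K, t = caraRho n Ω z w} with hA
  set B := {t : ℝ | ∃ w ∈ K, t = caraRho n Ω z w} with hB
  have hAsubB : A ⊆ B := by rintro t ⟨w, hw, rfl⟩; exact ⟨w, hfK hw, rfl⟩
  have hAne : A.Nonempty := by
    obtain ⟨w', hw', _⟩ := key w₀ hw₀K
    exact ⟨_, w', hw', rfl⟩
  have hBne : B.Nonempty := ⟨_, w₀, hw₀K, rfl⟩
  have hBbdd : BddBelow B := by
    refine ⟨0, ?_⟩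
    rintro t ⟨w, hw, rfl⟩
    exact caraRho_nonneg hzΩ (hKΩ hw)
  have hAbdd : BddBelow A := hBbdd.mono hAsubB
  apply le_antisymm
  · apply le_csInf hBne
    rintro t ⟨w, hw, rfl⟩
    obtain ⟨w', hw', hle⟩ := key w hw
    exact le_trans (csInf_le hAbdd ⟨w', hw', rfl⟩) hle
  · exact csInf_le_csInf hBbdd hAne hAsubB


end
end

section
/- Let Ω ⊆ ℂⁿ be a bounded, convex, open set containing the origin, and let K ⊆ Ω be compact such that Ω ∖ K is connected and nonempty. If F : Ω → ℂⁿ is holomorphic and F(Ω ∖ K) ⊆ Ω, then F(Ω) ⊆ Ω. -/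
/-- Maximum modulus principle auxiliary lemma: if a strict bound on `‖h‖` holds on `Ω \ K`
then it holds on all of `Ω`. -/
lemma aux_max_mod {n : ℕ} {Ω K : Set (Fin n → ℂ)}
    (hΩopen : IsOpen Ω) (hΩconn : IsPreconnected Ω)
    (hK : IsCompact K) (hKΩ : K ⊆ Ω) (hne : (Ω \ K).Nonempty)
    {h : (Fin n → ℂ) → ℂ} (hd : DifferentiableOn ℂ h Ω) {c : ℝ}
    (hb : ∀ z ∈ Ω \ K, ‖h z‖ < c) : ∀ z ∈ Ω, ‖h z‖ < c := by
  by_contra hcon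
  push_neg at hcon
  obtain ⟨x, hxΩ, hx⟩ := hcon
  have hxK : x ∈ K := by
    by_contra hxK
    exact absurd (hb x ⟨hxΩ, hxK⟩) (not_lt.2 hx)
  obtain ⟨w, hwK, hw⟩ := hK.exists_isMaxOn ⟨x, hxK⟩ ((hd.continuousOn.mono hKΩ).norm)
  have hmax : IsMaxOn (norm ∘ h) Ω w := by
    intro z hz
    by_cases hzK : z ∈ K
    · exact hw hzK
    · exact le_trans (le_of_lt (hb z ⟨hz, hzK⟩)) (le_trans hx (hw hxK))
  have heq := Complex.eqOn_of_isPreconnected_of_isMaxOn_norm hΩconn hΩopen hd (hKΩ hwK) hmax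
  obtain ⟨z1, hz1⟩ := hne
  have h1 : ‖h z1‖ < c := hb z1 hz1
  have h2 : h z1 = h w := heq hz1.1
  have h3 : c ≤ ‖h w‖ := le_trans hx (hw hxK)
  rw [h2] at h1
  exact absurd h1 (not_lt.2 h3)

/-- Let `Ω ⊆ ℂⁿ` be a bounded, convex, open (connected) set containing the origin, and
let `K ⊆ Ω` be compact with `Ω \ K` connected and nonempty.  If `F : Ω → ℂⁿ` is
holomorphic and `F(Ω \ K) ⊆ Ω`, then `F(Ω) ⊆ Ω`. -/
theorem image_subset_of_image_diff_subset (n : ℕ) (Ω : Set (Fin n → ℂ))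
    (hΩopen : IsOpen Ω) (hΩconn : IsConnected Ω) (hΩbdd : Bornology.IsBounded Ω)
    (hΩconv : Convex ℝ Ω) (h0 : (0 : Fin n → ℂ) ∈ Ω)
    (K : Set (Fin n → ℂ)) (hK : IsCompact K) (hKΩ : K ⊆ Ω)
    (hDconn : IsConnected (Ω \ K))
    (F : (Fin n → ℂ) → (Fin n → ℂ)) (hF : DifferentiableOn ℂ F Ω)
    (hFD : F '' (Ω \ K) ⊆ Ω) : F '' Ω ⊆ Ω := by
  rintro y ⟨x, hx, rfl⟩
  by_contra hy
  obtain ⟨f, hf⟩ := geometric_hahn_banach_open_point hΩconv hΩopen hy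
  set ℓ : (Fin n → ℂ) →L[ℂ] ℂ := ContinuousLinearMap.extendTo𝕜' f with hℓ
  have hre : ∀ v, (ℓ v).re = f v := fun v => f.toLinearMap.extendTo𝕜'_apply_re (𝕜 := ℂ) v
  set h : (Fin n → ℂ) → ℂ := fun z => Complex.exp (ℓ (F z)) with hh
  have hnorm : ∀ z, ‖h z‖ = Real.exp (f (F z)) := by
    intro z
    rw [hh]
    simp only [Complex.norm_exp, hre]
  have hd : DifferentiableOn ℂ h Ω := (ℓ.differentiable.comp_differentiableOn hF).cexp
  have hb : ∀ z ∈ Ω \ K, ‖h z‖ < Real.exp (f (F x)) := by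
    intro z hz
    rw [hnorm]
    exact Real.exp_lt_exp.2 (hf _ (hFD ⟨z, hz, rfl⟩))
  have := aux_max_mod hΩopen hΩconn.isPreconnected hK hKΩ hDconn.nonempty hd hb x hx
  rw [hnorm] at this
  exact absurd this (lt_irrefl _)
end

section
/- Let Ω be the convex hull of the symmetrized bidisc G₂, fix 0 < r < 1 such that the closed bidisc {(z₁,z₂) : |z₁| ≤ r, |z₂| ≤ r} ⊆ Ω, let Q = (0,r), and fix 0 < ε < r such that the open ball B(Q,ε) ⊆ Ω. Then K = ∂(𝔻(0,r) × 𝔻(0,r)) ∖ B(Q,ε) is a compact subset of Ω and D = Ω ∖ K is connected. -/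
lemma isOpen_symBidisc : IsOpen symBidisc := by
  rw [Metric.isOpen_iff]
  rintro p ⟨z₀, w₀, hz₀, hw₀, rfl⟩
  set m : ℝ := max (‖z₀‖) (‖w₀‖) with hm_def
  have hm : m < 1 := max_lt hz₀ hw₀
  have hm0 : 0 ≤ m := le_trans (norm_nonneg _) (le_max_left _ _)
  set η : ℝ := (1 - m) / 2 with hη_def
  have hη0 : 0 < η := by rw [hη_def]; linarith
  set B : ℝ := ‖(z₀ + w₀)‖ + ‖(z₀ * w₀)‖ + 2 with hB_def
  have hB1 : 1 ≤ B := by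
    have := norm_nonneg (z₀ + w₀); have := norm_nonneg (z₀ * w₀); rw [hB_def]; linarith
  set δ : ℝ := min 1 (η ^ 2 / (B + 1)) with hδ_def
  have hδ0 : 0 < δ := lt_min one_pos (by positivity)
  refine ⟨δ, hδ0, ?_⟩
  intro q hq
  have hd : max (dist q.1 (z₀ + w₀)) (dist q.2 (z₀ * w₀)) < δ := by
    have h := Metric.mem_ball.mp hq
    rw [Prod.dist_eq] at h
    exact h
  have hq1 : ‖(q.1 - (z₀ + w₀))‖ < δ := by
    have := (le_max_left (dist q.1 (z₀ + w₀)) (dist q.2 (z₀ * w₀))).trans_lt hd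
    rwa [Complex.dist_eq] at this
  have hq2 : ‖(q.2 - z₀ * w₀)‖ < δ := by
    have := (le_max_right (dist q.1 (z₀ + w₀)) (dist q.2 (z₀ * w₀))).trans_lt hd
    rwa [Complex.dist_eq] at this
  have hδ1 : δ ≤ 1 := min_le_left _ _
  have hδ2 : δ ≤ η ^ 2 / (B + 1) := min_le_right _ _
  -- key claim : any root of t^2 - q.1 t + q.2 has modulus < 1
  have key : ∀ τ : ℂ, τ ^ 2 - q.1 * τ + q.2 = 0 → ‖τ‖ < 1 := by
    intro τ hτ
    have habsq1 : ‖q.1‖ ≤ ‖(z₀ + w₀)‖ + 1 := by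
      calc ‖q.1‖ = ‖((q.1 - (z₀ + w₀)) + (z₀ + w₀))‖ := by ring_nf
        _ ≤ ‖(q.1 - (z₀ + w₀))‖ + ‖(z₀ + w₀)‖ := norm_add_le _ _
        _ ≤ ‖(z₀ + w₀)‖ + 1 := by linarith [hq1.le.trans hδ1]
    have habsq2 : ‖q.2‖ ≤ ‖(z₀ * w₀)‖ + 1 := by
      calc ‖q.2‖ = ‖((q.2 - z₀ * w₀) + z₀ * w₀)‖ := by ring_nf
        _ ≤ ‖(q.2 - z₀ * w₀)‖ + ‖(z₀ * w₀)‖ := norm_add_le _ _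
        _ ≤ ‖(z₀ * w₀)‖ + 1 := by linarith [hq2.le.trans hδ1]
    -- bound |τ| ≤ B
    have hτsq : τ ^ 2 = q.1 * τ - q.2 := by linear_combination hτ
    have hbound : ‖τ‖ ≤ B := by
      by_contra h
      push_neg at h
      have h1 : 1 ≤ ‖τ‖ := le_trans hB1 h.le
      have h2 : (‖τ‖) ^ 2 ≤ ‖q.1‖ * ‖τ‖ + ‖q.2‖ := by
        calc (‖τ‖) ^ 2 = ‖(τ ^ 2)‖ := by rw [norm_pow]
          _ = ‖(q.1 * τ - q.2)‖ := by rw [hτsq]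
          _ ≤ ‖(q.1 * τ)‖ + ‖q.2‖ := norm_sub_le _ _
          _ = ‖q.1‖ * ‖τ‖ + ‖q.2‖ := by rw [norm_mul]
      nlinarith [norm_nonneg q.1, norm_nonneg q.2, norm_nonneg (z₀ + w₀),
        norm_nonneg (z₀ * w₀)]
    -- product bound
    have hprod : ‖(τ - z₀)‖ * ‖(τ - w₀)‖ ≤ η ^ 2 := by
      have hid : (τ - z₀) * (τ - w₀) = (q.1 - (z₀ + w₀)) * τ + (z₀ * w₀ - q.2) := by
        linear_combination hτ
      calc ‖(τ - z₀)‖ * ‖(τ - w₀)‖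
          = ‖((τ - z₀) * (τ - w₀))‖ := (norm_mul _ _).symm
        _ = ‖((q.1 - (z₀ + w₀)) * τ + (z₀ * w₀ - q.2))‖ := by rw [hid]
        _ ≤ ‖((q.1 - (z₀ + w₀)) * τ)‖ + ‖(z₀ * w₀ - q.2)‖ :=
            norm_add_le _ _
        _ = ‖(q.1 - (z₀ + w₀))‖ * ‖τ‖ + ‖(q.2 - z₀ * w₀)‖ := by
            rw [norm_mul, ← norm_neg (z₀ * w₀ - q.2)]; ring_nf
        _ ≤ δ * B + δ := by
            have := norm_nonneg τ
            nlinarith [hq1.le, hq2.le, norm_nonneg (q.1 - (z₀ + w₀))]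
        _ = δ * (B + 1) := by ring
        _ ≤ (η ^ 2 / (B + 1)) * (B + 1) := by nlinarith
        _ = η ^ 2 := by field_simp
    have hmin : ‖(τ - z₀)‖ ≤ η ∨ ‖(τ - w₀)‖ ≤ η := by
      by_contra h
      push_neg at h
      nlinarith [h.1, h.2, norm_nonneg (τ - z₀), norm_nonneg (τ - w₀)]
    rcases hmin with h | h
    · calc ‖τ‖ = ‖((τ - z₀) + z₀)‖ := by ring_nf
        _ ≤ ‖(τ - z₀)‖ + ‖z₀‖ := norm_add_le _ _
        _ ≤ η + m := by
            have : ‖z₀‖ ≤ m := le_max_left _ _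
            linarith
        _ < 1 := by rw [hη_def]; linarith
    · calc ‖τ‖ = ‖((τ - w₀) + w₀)‖ := by ring_nf
        _ ≤ ‖(τ - w₀)‖ + ‖w₀‖ := norm_add_le _ _
        _ ≤ η + m := by
            have : ‖w₀‖ ≤ m := le_max_right _ _
            linarith
        _ < 1 := by rw [hη_def]; linarith
  obtain ⟨ξ, hξ⟩ := IsAlgClosed.exists_pow_nat_eq (q.1 ^ 2 - 4 * q.2) (n := 2) two_pos
  refine ⟨(q.1 + ξ) / 2, (q.1 - ξ) / 2, ?_, ?_, ?_⟩
  · exact key _ (by linear_combination hξ / 4)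
  · exact key _ (by linear_combination hξ / 4)
  · have h1 : (q.1 + ξ) / 2 + (q.1 - ξ) / 2 = q.1 := by ring
    have h2 : (q.1 + ξ) / 2 * ((q.1 - ξ) / 2) = q.2 := by linear_combination -hξ / 4
    rw [h1, h2]

lemma isOpen_hull : IsOpen (convexHull ℝ symBidisc) := by
  have h1 : symBidisc ⊆ interior (convexHull ℝ symBidisc) :=
    interior_maximal (subset_convexHull ℝ _) isOpen_symBidisc
  have h2 : convexHull ℝ symBidisc ⊆ interior (convexHull ℝ symBidisc) :=
    convexHull_min h1 (convex_convexHull ℝ symBidisc).interior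
  have h3 : convexHull ℝ symBidisc = interior (convexHull ℝ symBidisc) :=
    Set.Subset.antisymm h2 interior_subset
  rw [h3]
  exact isOpen_interior

lemma joinedIn_segment {D : Set (ℂ × ℂ)} {a b : ℂ × ℂ}
    (h : ∀ t : ℝ, 0 ≤ t → t ≤ 1 → (1 - t) • a + t • b ∈ D) : JoinedIn D a b := by
  refine ⟨⟨⟨fun t => (1 - (t : ℝ)) • a + (t : ℝ) • b, by fun_prop⟩, by simp, by simp⟩,
    fun t => h t t.2.1 t.2.2⟩

lemma joinedIn_arc {D : Set (ℂ × ℂ)} (ρ θ : ℝ)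
    (h : ∀ ψ : ℝ, ((0 : ℂ), (ρ : ℂ) * Complex.exp (ψ * Complex.I)) ∈ D) :
    JoinedIn D ((0 : ℂ), (ρ : ℂ) * Complex.exp (θ * Complex.I)) ((0 : ℂ), (ρ : ℂ)) := by
  refine ⟨⟨⟨fun t => ((0 : ℂ), (ρ : ℂ) * Complex.exp ((((1 - (t : ℝ)) * θ : ℝ)) * Complex.I)),
    ?_⟩, ?_, ?_⟩, fun t => h _⟩
  · fun_prop
  · simp
  · norm_num [Complex.exp_zero]

lemma abs_smul_fst (c : ℝ) (hc : 0 ≤ c) (p : ℂ × ℂ) :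
    ‖((c • p).1)‖ = c * ‖p.1‖ := by
  rw [Prod.smul_fst, Complex.real_smul, norm_mul, Complex.norm_real, Real.norm_eq_abs, _root_.abs_of_nonneg hc]

lemma abs_smul_snd (c : ℝ) (hc : 0 ≤ c) (p : ℂ × ℂ) :
    ‖((c • p).2)‖ = c * ‖p.2‖ := by
  rw [Prod.smul_snd, Complex.real_smul, norm_mul, Complex.norm_real, Real.norm_eq_abs, _root_.abs_of_nonneg hc]

lemma abs_affine_le {t : ℝ} (ht0 : 0 ≤ t) (ht1 : t ≤ 1) (a b : ℂ) :
    ‖((1 - t) • a + t • b)‖ ≤ (1 - t) * ‖a‖ + t * ‖b‖ := by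
  calc ‖((1 - t) • a + t • b)‖
      ≤ ‖((1 - t) • a)‖ + ‖(t • b)‖ := norm_add_le _ _
    _ = (1 - t) * ‖a‖ + t * ‖b‖ := by
        rw [Complex.real_smul, Complex.real_smul, norm_mul, norm_mul, Complex.norm_real, Real.norm_eq_abs,
          Complex.norm_real, Real.norm_eq_abs, _root_.abs_of_nonneg ht0, _root_.abs_of_nonneg (by linarith)]

set_option maxHeartbeats 1000000 in
/-- Let `Ω` be the convex hull of the symmetrized bidisc, `0 < r < 1` with the closed
bidisc of radius `r` contained in `Ω`, `Q = (0,r)`, and `0 < ε < r` with `B(Q,ε) ⊆ Ω`.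
Then `K = ∂(𝔻(0,r) × 𝔻(0,r)) \ B(Q,ε)` is a compact subset of `Ω` and `D = Ω \ K` is
connected. -/
theorem Kset_isCompact_subset_and_diff_connected (r ε : ℝ) (hr0 : 0 < r) (hr1 : r < 1)
    (hbid : {p : ℂ × ℂ | ‖p.1‖ ≤ r ∧ ‖p.2‖ ≤ r} ⊆
      convexHull ℝ symBidisc)
    (hε0 : 0 < ε) (hεr : ε < r)
    (hball : Metric.ball (((0 : ℂ), (r : ℂ)) : ℂ × ℂ) ε ⊆ convexHull ℝ symBidisc) :
    IsCompact (frontier (Metric.ball (0 : ℂ) r ×ˢ Metric.ball (0 : ℂ) r) \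
        Metric.ball (((0 : ℂ), (r : ℂ)) : ℂ × ℂ) ε) ∧
      (frontier (Metric.ball (0 : ℂ) r ×ˢ Metric.ball (0 : ℂ) r) \
          Metric.ball (((0 : ℂ), (r : ℂ)) : ℂ × ℂ) ε) ⊆ convexHull ℝ symBidisc ∧
      IsConnected (convexHull ℝ symBidisc \
        (frontier (Metric.ball (0 : ℂ) r ×ˢ Metric.ball (0 : ℂ) r) \
          Metric.ball (((0 : ℂ), (r : ℂ)) : ℂ × ℂ) ε)) := by
  have hΩopen : IsOpen (convexHull ℝ symBidisc) := isOpen_hull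
  have hΩconv : Convex ℝ (convexHull ℝ symBidisc) := convex_convexHull ℝ _
  set Q : ℂ × ℂ := (((0 : ℂ), (r : ℂ)) : ℂ × ℂ) with hQdef
  set C' : Set (ℂ × ℂ) := Metric.closedBall (0 : ℂ) r ×ˢ Metric.closedBall (0 : ℂ) r with hC'def
  have hC'c : IsCompact C' := (isCompact_closedBall _ _).prod (isCompact_closedBall _ _)
  have hC'mem : ∀ p : ℂ × ℂ, p ∈ C' ↔ ‖p.1‖ ≤ r ∧ ‖p.2‖ ≤ r := by
    intro p
    simp [hC'def, Set.mem_prod, Metric.mem_closedBall, Complex.dist_eq, sub_zero]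
  have hC'Ω : C' ⊆ convexHull ℝ symBidisc := fun p hp => hbid ((hC'mem p).mp hp)
  -- frontier characterization
  have hfr_iff : ∀ p : ℂ × ℂ,
      p ∈ frontier (Metric.ball (0 : ℂ) r ×ˢ Metric.ball (0 : ℂ) r) ↔
      ‖p.1‖ ≤ r ∧ ‖p.2‖ ≤ r ∧
        (‖p.1‖ = r ∨ ‖p.2‖ = r) := by
    intro p
    rw [frontier_prod_eq, ]
    rw [closure_ball _ hr0.ne', frontier_ball _ hr0.ne']
    simp only [Set.mem_union, Set.mem_prod, Metric.mem_closedBall, Metric.mem_sphere,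
      Complex.dist_eq, sub_zero]
    constructor
    · rintro (⟨h1, h2⟩ | ⟨h1, h2⟩)
      · exact ⟨h1, h2.le, Or.inr h2⟩
      · exact ⟨h1.le, h2, Or.inl h1⟩
    · rintro ⟨h1, h2, h3 | h3⟩
      · exact Or.inr ⟨h3, h2⟩
      · exact Or.inl ⟨h1, h3⟩
  have hfr_sub : frontier (Metric.ball (0 : ℂ) r ×ˢ Metric.ball (0 : ℂ) r) ⊆ C' := by
    intro p hp
    exact (hC'mem p).mpr ⟨((hfr_iff p).mp hp).1, ((hfr_iff p).mp hp).2.1⟩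
  set K : Set (ℂ × ℂ) := frontier (Metric.ball (0 : ℂ) r ×ˢ Metric.ball (0 : ℂ) r) \
    Metric.ball Q ε with hKdef
  have hKclosed : IsClosed K := isClosed_frontier.sdiff Metric.isOpen_ball
  have part1 : IsCompact K :=
    hC'c.of_isClosed_subset hKclosed (Set.diff_subset.trans hfr_sub)
  have part2 : K ⊆ convexHull ℝ symBidisc := (Set.diff_subset.trans hfr_sub).trans hC'Ω
  refine ⟨part1, part2, ?_⟩
  -- thickening
  obtain ⟨δ, hδ0, hδsub⟩ := hC'c.exists_thickening_subset_open hΩopen hC'Ω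
  set ρ : ℝ := r + min δ ε / 2 with hρdef
  have hmin0 : 0 < min δ ε := lt_min hδ0 hε0
  have hρr : r < ρ := by rw [hρdef]; linarith
  have hρ0 : 0 < ρ := hr0.trans hρr
  have hρδ : ρ - r < δ := by
    have := min_le_left δ ε; rw [hρdef]; linarith
  have hρε : ρ - r < ε := by
    have := min_le_right δ ε; rw [hρdef]; linarith
  have hCρ : ∀ p : ℂ × ℂ, ‖p.1‖ ≤ ρ → ‖p.2‖ ≤ ρ →
      p ∈ convexHull ℝ symBidisc := by
    intro p h1 h2
    apply hδsub
    rw [Metric.mem_thickening_iff]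
    have hcoord : ∀ z : ℂ, ‖z‖ ≤ ρ → dist z ((r / ρ) • z) ≤ ρ - r := by
      intro z hz
      rw [Complex.dist_eq]
      have hzz : z - (r / ρ) • z = ((1 - r / ρ : ℝ) : ℂ) * z := by
        rw [Complex.real_smul]; push_cast; ring
      rw [hzz, norm_mul, Complex.norm_real, Real.norm_eq_abs]
      have h1ρ : 0 ≤ 1 - r / ρ := by
        rw [sub_nonneg, div_le_one hρ0]; exact hρr.le
      rw [_root_.abs_of_nonneg h1ρ]
      calc (1 - r / ρ) * ‖z‖ ≤ (1 - r / ρ) * ρ :=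
            mul_le_mul_of_nonneg_left hz h1ρ
        _ = ρ - r := by field_simp
    refine ⟨(r / ρ) • p, (hC'mem _).mpr ⟨?_, ?_⟩, ?_⟩
    · rw [abs_smul_fst _ (by positivity)]
      calc (r / ρ) * ‖p.1‖ ≤ (r / ρ) * ρ :=
            mul_le_mul_of_nonneg_left h1 (by positivity)
        _ = r := by field_simp
    · rw [abs_smul_snd _ (by positivity)]
      calc (r / ρ) * ‖p.2‖ ≤ (r / ρ) * ρ :=
            mul_le_mul_of_nonneg_left h2 (by positivity)
        _ = r := by field_simp
    · rw [Prod.dist_eq]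
      have d1 := hcoord p.1 h1
      have d2 := hcoord p.2 h2
      have : dist p.1 (((r / ρ) • p).1) ≤ ρ - r := by rwa [Prod.smul_fst]
      have : dist p.2 (((r / ρ) • p).2) ≤ ρ - r := by rwa [Prod.smul_snd]
      calc max (dist p.1 (((r / ρ) • p).1)) (dist p.2 (((r / ρ) • p).2)) ≤ ρ - r := by
            apply max_le <;> [rwa [Prod.smul_fst]; rwa [Prod.smul_snd]]
        _ < δ := hρδ
  -- avoidance helpers
  have hnotK_ball : ∀ p : ℂ × ℂ, p ∈ Metric.ball Q ε → p ∉ K := fun p hp h => h.2 hp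
  have hnotK_lt : ∀ p : ℂ × ℂ, ‖p.1‖ < r → ‖p.2‖ < r → p ∉ K := by
    intro p h1 h2 hk
    rcases ((hfr_iff p).mp hk.1).2.2 with h | h
    · exact h1.ne h
    · exact h2.ne h
  have hnotK_gt : ∀ p : ℂ × ℂ, r < ‖p.1‖ ∨ r < ‖p.2‖ → p ∉ K := by
    intro p hp hk
    obtain ⟨h1, h2, -⟩ := (hfr_iff p).mp hk.1
    rcases hp with h | h
    · exact absurd h1 (not_le.mpr h)
    · exact absurd h2 (not_le.mpr h)
  set D : Set (ℂ × ℂ) := convexHull ℝ symBidisc \ K with hDdef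
  have hQball : Q ∈ Metric.ball Q ε := Metric.mem_ball_self hε0
  have hQD : Q ∈ D := ⟨hball hQball, hnotK_ball Q hQball⟩
  -- arc membership
  have harcmem : ∀ ψ : ℝ, (((0 : ℂ), (ρ : ℂ) * Complex.exp (ψ * Complex.I)) : ℂ × ℂ) ∈ D := by
    intro ψ
    have habs2 : ‖((ρ : ℂ) * Complex.exp (ψ * Complex.I))‖ = ρ := by
      rw [norm_mul, Complex.norm_real, Real.norm_eq_abs, Complex.norm_exp_ofReal_mul_I, mul_one,
        _root_.abs_of_pos hρ0]
    refine ⟨hCρ _ (by simpa using hρ0.le) (le_of_eq habs2), hnotK_gt _ (Or.inr ?_)⟩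
    rw [show (((0 : ℂ), (ρ : ℂ) * Complex.exp (ψ * Complex.I)) : ℂ × ℂ).2 =
      (ρ : ℂ) * Complex.exp (ψ * Complex.I) from rfl, habs2]
    exact hρr
  -- key2 : second coordinate has modulus ρ
  have key2 : ∀ p : ℂ × ℂ, ‖p.1‖ ≤ ρ → ‖p.2‖ = ρ →
      JoinedIn D p ((0 : ℂ), (ρ : ℂ)) := by
    intro p h1 h2
    have j1 : JoinedIn D p (((0 : ℂ), p.2) : ℂ × ℂ) := by
      apply joinedIn_segment
      intro t ht0 ht1
      have hpt : (1 - t) • p + t • (((0 : ℂ), p.2) : ℂ × ℂ) = (((1 - t) • p.1 : ℂ), p.2) := by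
        rw [← Prod.mk.eta (p := p)]
        rw [Prod.smul_mk, Prod.smul_mk, Prod.mk_add_mk, smul_zero, add_zero]
        congr 1
        rw [← add_smul]
        norm_num
      rw [hpt]
      have habs1 : ‖((1 - t) • p.1 : ℂ)‖ ≤ ρ := by
        rw [Complex.real_smul, norm_mul, Complex.norm_real, Real.norm_eq_abs,
          _root_.abs_of_nonneg (by linarith : (0:ℝ) ≤ 1 - t)]
        calc (1 - t) * ‖p.1‖ ≤ 1 * ‖p.1‖ := by
              apply mul_le_mul_of_nonneg_right (by linarith) (norm_nonneg _)
          _ ≤ ρ := by rw [one_mul]; exact h1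
      refine ⟨hCρ _ habs1 (le_of_eq h2), hnotK_gt _ (Or.inr ?_)⟩
      rw [show ((((1 - t) • p.1 : ℂ), p.2) : ℂ × ℂ).2 = p.2 from rfl, h2]
      exact hρr
    have hp2 : p.2 = (ρ : ℂ) * Complex.exp ((Complex.arg p.2 : ℝ) * Complex.I) := by
      conv_lhs => rw [← Complex.norm_mul_exp_arg_mul_I p.2]
      rw [h2]
    have j2 : JoinedIn D (((0 : ℂ), p.2) : ℂ × ℂ) ((0 : ℂ), (ρ : ℂ)) := by
      rw [show (((0 : ℂ), p.2) : ℂ × ℂ) =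
        ((0 : ℂ), (ρ : ℂ) * Complex.exp ((Complex.arg p.2 : ℝ) * Complex.I)) from by rw [← hp2]]
      exact joinedIn_arc ρ (Complex.arg p.2) harcmem
    exact j1.trans j2
  -- key1 : first coordinate has modulus ρ
  have key1 : ∀ p : ℂ × ℂ, ‖p.1‖ = ρ → ‖p.2‖ ≤ ρ →
      JoinedIn D p ((0 : ℂ), (ρ : ℂ)) := by
    intro p h1 h2
    have j1 : JoinedIn D p ((p.1, (ρ : ℂ)) : ℂ × ℂ) := by
      apply joinedIn_segment
      intro t ht0 ht1
      have hpt : (1 - t) • p + t • ((p.1, (ρ : ℂ)) : ℂ × ℂ)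
          = (p.1, ((1 - t) • p.2 + t • (ρ : ℂ) : ℂ)) := by
        rw [← Prod.mk.eta (p := p)]
        rw [Prod.smul_mk, Prod.smul_mk, Prod.mk_add_mk]
        congr 1
        rw [← add_smul]
        norm_num
      rw [hpt]
      have habs2 : ‖((1 - t) • p.2 + t • (ρ : ℂ) : ℂ)‖ ≤ ρ := by
        calc ‖((1 - t) • p.2 + t • (ρ : ℂ))‖
            ≤ (1 - t) * ‖p.2‖ + t * ‖(ρ : ℂ)‖ := abs_affine_le ht0 ht1 _ _
          _ ≤ (1 - t) * ρ + t * ρ := by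
              rw [Complex.norm_real, Real.norm_eq_abs, _root_.abs_of_pos hρ0]
              have := mul_le_mul_of_nonneg_left h2 (by linarith : (0:ℝ) ≤ 1 - t)
              linarith
          _ = ρ := by ring
      refine ⟨hCρ _ (le_of_eq h1) habs2, hnotK_gt _ (Or.inl ?_)⟩
      rw [show ((p.1, ((1 - t) • p.2 + t • (ρ : ℂ) : ℂ)) : ℂ × ℂ).1 = p.1 from rfl, h1]
      exact hρr
    have j2 : JoinedIn D ((p.1, (ρ : ℂ)) : ℂ × ℂ) ((0 : ℂ), (ρ : ℂ)) :=
      key2 (p.1, (ρ : ℂ)) (le_of_eq h1) (by rw [show ((p.1, (ρ:ℂ)) : ℂ × ℂ).2 = (ρ:ℂ) from rfl,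
        Complex.norm_real, Real.norm_eq_abs, _root_.abs_of_pos hρ0])
    exact j1.trans j2
  -- (0,ρ) to Q
  have jc3 : JoinedIn D (((0 : ℂ), (ρ : ℂ)) : ℂ × ℂ) Q := by
    apply joinedIn_segment
    intro t ht0 ht1
    have hpt : (1 - t) • (((0 : ℂ), (ρ : ℂ)) : ℂ × ℂ) + t • Q
        = ((0 : ℂ), ((1 - t) • (ρ : ℂ) + t • (r : ℂ) : ℂ)) := by
      rw [hQdef, Prod.smul_mk, Prod.smul_mk, Prod.mk_add_mk]
      simp
    rw [hpt]
    have hmem : (((0 : ℂ), ((1 - t) • (ρ : ℂ) + t • (r : ℂ) : ℂ)) : ℂ × ℂ) ∈ Metric.ball Q ε := by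
      rw [Metric.mem_ball, hQdef, Prod.dist_eq]
      apply max_lt
      · simpa using hε0
      · rw [Complex.dist_eq]
        have hsub : ((1 - t) • (ρ : ℂ) + t • (r : ℂ)) - (r : ℂ) = (((1 - t) * (ρ - r) : ℝ) : ℂ) := by
          rw [Complex.real_smul, Complex.real_smul]; push_cast; ring
        rw [hsub, Complex.norm_real, Real.norm_eq_abs, _root_.abs_of_nonneg (by nlinarith)]
        calc (1 - t) * (ρ - r) ≤ 1 * (ρ - r) := by nlinarith
          _ < ε := by linarith
    exact ⟨hball hmem, hnotK_ball _ hmem⟩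
  -- Main connectivity
  apply IsPathConnected.isConnected
  refine ⟨Q, hQD, ?_⟩
  intro x hx
  apply JoinedIn.symm
  by_cases hxb : x ∈ Metric.ball Q ε
  · -- case (a)
    apply joinedIn_segment
    intro t ht0 ht1
    have : (1 - t) • x + t • Q ∈ Metric.ball Q ε :=
      (convex_ball Q ε) hxb hQball (by linarith) ht0 (by ring)
    exact ⟨hball this, hnotK_ball _ this⟩
  · by_cases hlt : ‖x.1‖ < r ∧ ‖x.2‖ < r
    · -- case (b)
      apply joinedIn_segment
      intro t ht0 ht1
      rcases ht1.lt_or_eq with ht | ht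
      · have h1 : ‖((1 - t) • x + t • Q).1‖ < r := by
          rw [show ((1 - t) • x + t • Q).1 = (1 - t) • x.1 + t • Q.1 from rfl, hQdef]
          calc ‖((1 - t) • x.1 + t • (0 : ℂ))‖
              ≤ (1 - t) * ‖x.1‖ + t * ‖(0 : ℂ)‖ := abs_affine_le ht0 ht1 _ _
            _ < r := by
                rw [norm_zero, mul_zero, add_zero]
                nlinarith [hlt.1, norm_nonneg x.1]
        have h2 : ‖((1 - t) • x + t • Q).2‖ < r := by
          rw [show ((1 - t) • x + t • Q).2 = (1 - t) • x.2 + t • Q.2 from rfl, hQdef]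
          calc ‖((1 - t) • x.2 + t • (r : ℂ))‖
              ≤ (1 - t) * ‖x.2‖ + t * ‖(r : ℂ)‖ := abs_affine_le ht0 ht1 _ _
            _ < r := by
                rw [Complex.norm_real, Real.norm_eq_abs, _root_.abs_of_pos hr0]
                nlinarith [hlt.2, mul_lt_mul_of_pos_left hlt.2 (by linarith : (0:ℝ) < 1 - t)]
        exact ⟨hbid ⟨h1.le, h2.le⟩, hnotK_lt _ h1 h2⟩
      · have : (1 - t) • x + t • Q = Q := by subst ht; simp
        rw [this]
        exact hQD
    · -- case (c) : exterior
      have hgt : r < ‖x.1‖ ∨ r < ‖x.2‖ := by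
        by_contra hcon
        push_neg at hcon
        have h1 := hcon.1
        have h2 := hcon.2
        have heq : ‖x.1‖ = r ∨ ‖x.2‖ = r := by
          rcases lt_or_eq_of_le h1 with h | h
          · rcases lt_or_eq_of_le h2 with h' | h'
            · exact absurd ⟨h, h'⟩ hlt
            · exact Or.inr h'
          · exact Or.inl h
        exact hx.2 ⟨(hfr_iff x).mpr ⟨h1, h2, heq⟩, hxb⟩
      set M : ℝ := max (‖x.1‖) (‖x.2‖) with hMdef
      have hrM : r < M := lt_max_iff.mpr hgt
      have hM0 : 0 < M := hr0.trans hrM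
      -- step c1 : x to x' = (ρ/M) • x
      have hc1 : JoinedIn D x ((ρ / M) • x) := by
        apply joinedIn_segment
        intro t ht0 ht1
        have hrw : (1 - t) • x + t • ((ρ / M) • x) = ((1 - t) + t * (ρ / M)) • x := by
          rw [smul_smul, ← add_smul]
        rw [hrw]
        set c : ℝ := (1 - t) + t * (ρ / M) with hcdef
        have hρM0 : 0 < ρ / M := by positivity
        have hc0 : 0 ≤ c := by
          have := mul_nonneg ht0 hρM0.le
          rw [hcdef]; linarith
        have hc_ge : min 1 (ρ / M) ≤ c := by
          nlinarith [mul_nonneg (by linarith [min_le_left 1 (ρ / M)] : (0:ℝ) ≤ 1 - min 1 (ρ / M))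
              (by linarith : (0:ℝ) ≤ 1 - t),
            mul_nonneg (by linarith [min_le_right 1 (ρ / M)] : (0:ℝ) ≤ ρ / M - min 1 (ρ / M)) ht0]
        have hc_le : c ≤ max 1 (ρ / M) := by
          nlinarith [mul_nonneg (by linarith [le_max_left 1 (ρ / M)] : (0:ℝ) ≤ max 1 (ρ / M) - 1)
              (by linarith : (0:ℝ) ≤ 1 - t),
            mul_nonneg (by linarith [le_max_right 1 (ρ / M)] :
              (0:ℝ) ≤ max 1 (ρ / M) - ρ / M) ht0]
        have hmemΩ : c • x ∈ convexHull ℝ symBidisc := by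
          rcases le_total ρ M with hMρ | hMρ
          · -- ρ ≤ M : c ≤ 1, use convexity with 0
            have hc1' : c ≤ 1 := by
              have : ρ / M ≤ 1 := by rw [div_le_one hM0]; exact hMρ
              calc c ≤ max 1 (ρ / M) := hc_le
                _ = 1 := max_eq_left this
            have h0Ω : ((0 : ℂ), (0 : ℂ)) ∈ convexHull ℝ symBidisc :=
              hCρ _ (by simpa using hρ0.le) (by simpa using hρ0.le)
            have := hΩconv hx.1 h0Ω hc0 (by linarith : (0:ℝ) ≤ 1 - c) (by ring)
            simpa [Prod.mk_zero_zero] using this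
          · -- M ≤ ρ : c * M ≤ ρ, use hCρ
            have hcM : c * M ≤ ρ := by
              have h1ρM : 1 ≤ ρ / M := by rw [le_div_iff₀ hM0]; linarith
              have : c ≤ ρ / M := by
                calc c ≤ max 1 (ρ / M) := hc_le
                  _ = ρ / M := max_eq_right h1ρM
              calc c * M ≤ (ρ / M) * M := mul_le_mul_of_nonneg_right this hM0.le
                _ = ρ := by field_simp
            apply hCρ
            · rw [abs_smul_fst _ hc0]
              calc c * ‖x.1‖ ≤ c * M :=
                    mul_le_mul_of_nonneg_left (le_max_left _ _) hc0
                _ ≤ ρ := hcM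
            · rw [abs_smul_snd _ hc0]
              calc c * ‖x.2‖ ≤ c * M :=
                    mul_le_mul_of_nonneg_left (le_max_right _ _) hc0
                _ ≤ ρ := hcM
        have hcM_gt : r < c * M := by
          have hminM : min M ρ ≤ c * M := by
            rcases le_total 1 (ρ / M) with h | h
            · have hmin1 : min 1 (ρ / M) = 1 := min_eq_left h
              have h1c : 1 ≤ c := by rw [hmin1] at hc_ge; exact hc_ge
              calc min M ρ ≤ M := min_le_left _ _
                _ = 1 * M := (one_mul M).symm
                _ ≤ c * M := mul_le_mul_of_nonneg_right h1c hM0.le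
            · have hmin : min 1 (ρ / M) = ρ / M := min_eq_right h
              have : ρ / M ≤ c := hmin ▸ hc_ge
              calc min M ρ ≤ ρ := min_le_right _ _
                _ = (ρ / M) * M := by field_simp
                _ ≤ c * M := mul_le_mul_of_nonneg_right this hM0.le
          have : r < min M ρ := lt_min hrM hρr
          linarith
        have hnot : c • x ∉ K := by
          apply hnotK_gt
          have hmax : max (‖((c • x).1)‖) (‖((c • x).2)‖) = c * M := by
            rw [abs_smul_fst _ hc0, abs_smul_snd _ hc0, hMdef]
            rw [← mul_max_of_nonneg _ _ hc0]
          rw [← lt_max_iff, hmax]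
          exact hcM_gt
        exact ⟨hmemΩ, hnot⟩
      -- step c2 : x' to (0,ρ)
      have hc2 : JoinedIn D ((ρ / M) • x) ((0 : ℂ), (ρ : ℂ)) := by
        have hρM0 : (0:ℝ) ≤ ρ / M := by positivity
        have e1 : ‖(((ρ / M) • x).1)‖ = (ρ / M) * ‖x.1‖ :=
          abs_smul_fst _ hρM0 x
        have e2 : ‖(((ρ / M) • x).2)‖ = (ρ / M) * ‖x.2‖ :=
          abs_smul_snd _ hρM0 x
        have hMne : M ≠ 0 := hM0.ne'
        rcases le_total (‖x.1‖) (‖x.2‖) with h | h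
        · have hMeq : M = ‖x.2‖ := max_eq_right h
          apply key2
          · rw [e1]
            calc (ρ / M) * ‖x.1‖ ≤ (ρ / M) * M :=
                mul_le_mul_of_nonneg_left (le_max_left _ _) hρM0
              _ = ρ := div_mul_cancel₀ ρ hMne
          · rw [e2, ← hMeq]
            exact div_mul_cancel₀ ρ hMne
        · have hMeq : M = ‖x.1‖ := max_eq_left h
          apply key1
          · rw [e1, ← hMeq]
            exact div_mul_cancel₀ ρ hMne
          · rw [e2]
            calc (ρ / M) * ‖x.2‖ ≤ (ρ / M) * M :=
                mul_le_mul_of_nonneg_left (le_max_right _ _) hρM0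
              _ = ρ := div_mul_cancel₀ ρ hMne
      exact (hc1.trans hc2).trans jc3
end
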